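/- arXiv:2108.12034 — 5 statements merged into one kernel-verified Lean document; each statement's English description precedes it below -/
import Mathlib

section
/- Let a, b, c be the vertices of an equilateral triangle in the plane and let p be any fourth point distinct from a, b, c. Then the set {a, b, c, p} determines at least three distinct angle values in (0, π), where an angle value is |∠xyz| for distinct points x, y, z of the set. -/
/-!
If `{a, b, c, p}` determined at most two angle values, these would be `π / 3` and one more
value `θ`. Since the angles of a triangle sum to `π`, a nondegenerate triangle whose angles lie
in `{π / 3, θ}` is equiangular, hence equilateral. At each vertex of `abc` at most one of the two
triangles through `p` is degenerate, so `p` is at distance `|ab|` from `a`, `b` and `c`. But four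
pairwise equidistant points do not fit in the plane: their Gram determinant, which vanishes in
dimension two, equals `|ab|⁶ / 2`.
-/

open EuclideanGeometry

noncomputable section

abbrev Pt : Type := EuclideanSpace ℝ (Fin 2)

/-- The point (x, y) in the Euclidean plane. -/
def pt (x y : ℝ) : Pt := (WithLp.equiv 2 (Fin 2 → ℝ)).symm ![x, y]

/-- The set of distinct angle values in (0, π) determined by a planar point set. -/
def angleSet (P : Set Pt) : Set ℝ :=
  {θ : ℝ | θ ∈ Set.Ioo 0 Real.pi ∧
    ∃ x ∈ P, ∃ y ∈ P, ∃ z ∈ P, x ≠ y ∧ y ≠ z ∧ x ≠ z ∧ ∠ x y z = θ}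

open Real

section Euclidean

variable {V P : Type*} [NormedAddCommGroup V] [InnerProductSpace ℝ V] [MetricSpace P]
  [NormedAddTorsor V P]

lemma angle_eq_pi_div_three_of_dist_eq {x y z : P} (hxy : x ≠ y)
    (h1 : dist x y = dist y z) (h2 : dist y z = dist z x) : ∠ x y z = π / 3 := by
  have hx : ∠ y x z = ∠ y z x := angle_eq_angle_of_dist_eq (by rw [dist_comm y x, h1])
  have hy : ∠ x y z = ∠ x z y := angle_eq_angle_of_dist_eq (by rw [h1, h2, dist_comm])
  have hsum := angle_add_angle_add_angle_eq_pi z hxy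
  linarith [angle_comm z y x, angle_comm y z x]

lemma not_collinear_of_dist_eq {x y z : P} (hxy : x ≠ y)
    (h1 : dist x y = dist y z) (h2 : dist y z = dist z x) : ¬Collinear ℝ {x, y, z} := by
  have hzy : z ≠ y := by
    rw [← dist_pos, dist_comm, ← h1]
    exact dist_pos.mpr hxy
  rw [collinear_iff_eq_or_eq_or_angle_eq_zero_or_angle_eq_pi,
    angle_eq_pi_div_three_of_dist_eq hxy h1 h2]
  have := pi_pos
  rintro (h | h | h | h)
  exacts [hxy h, hzy h, by linarith, by linarith]

lemma not_collinear_or_not_collinear {a b c p : P} (habc : ¬Collinear ℝ {a, b, c})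
    (hpa : p ≠ a) : ¬Collinear ℝ {a, b, p} ∨ ¬Collinear ℝ {a, c, p} := by
  by_contra! h
  have hb : b ∈ line[ℝ, a, p] := h.1.mem_affineSpan_of_mem_of_ne (by simp) (by simp) (by simp)
    hpa.symm
  have hc : c ∈ line[ℝ, a, p] := h.2.mem_affineSpan_of_mem_of_ne (by simp) (by simp) (by simp)
    hpa.symm
  refine habc ((collinear_insert_insert_of_mem_affineSpan_pair hb hc).subset ?_)
  intro t
  simp only [Set.mem_insert_iff, Set.mem_singleton_iff]
  tauto

end Euclidean

lemma gram_det_eq_zero (u v w : EuclideanSpace ℝ (Fin 2)) :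
    inner ℝ u u * (inner ℝ v v * inner ℝ w w - inner ℝ v w ^ 2)
      - inner ℝ u v * (inner ℝ u v * inner ℝ w w - inner ℝ v w * inner ℝ u w)
      + inner ℝ u w * (inner ℝ u v * inner ℝ v w - inner ℝ v v * inner ℝ u w) = 0 := by
  simp only [PiLp.inner_apply, Fin.sum_univ_two, RCLike.inner_apply, conj_trivial]
  ring

lemma eq_of_pairwise_dist_eq {a b c p : Pt} (hac : dist a c = dist a b)
    (hbc : dist b c = dist a b) (hap : dist a p = dist a b) (hbp : dist b p = dist a b)
    (hcp : dist c p = dist a b) : a = b := by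
  set s := dist a b
  have hnorm : ∀ x : Pt, dist x p = s → inner ℝ (x - p) (x - p) = s ^ 2 := by
    intro x hx
    rw [real_inner_self_eq_norm_sq, ← dist_eq_norm, hx]
  have hinner : ∀ x y : Pt, dist x p = s → dist y p = s → dist x y = s →
      inner ℝ (x - p) (y - p) = s ^ 2 / 2 := by
    intro x y hx hy hxy
    have := norm_sub_sq_real (x - p) (y - p)
    rw [sub_sub_sub_cancel_right, ← dist_eq_norm, ← dist_eq_norm, ← dist_eq_norm, hx, hy,
      hxy] at this
    linarith
  have hgram := gram_det_eq_zero (a - p) (b - p) (c - p)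
  rw [hnorm a hap, hnorm b hbp, hnorm c hcp, hinner a b hap hbp rfl, hinner b c hbp hcp hbc,
    hinner a c hap hcp hac] at hgram
  have hs : s ^ 6 = 0 := by linarith
  exact dist_eq_zero.mp (pow_eq_zero_iff (by norm_num) |>.mp hs)

lemma angleSet_finite {S : Set Pt} (hS : S.Finite) : (angleSet S).Finite := by
  refine ((hS.prod (hS.prod hS)).image fun t : Pt × Pt × Pt => ∠ t.1 t.2.1 t.2.2).subset ?_
  rintro θ ⟨-, x, hx, y, hy, z, hz, -, -, -, rfl⟩
  exact ⟨(x, y, z), ⟨hx, hy, hz⟩, rfl⟩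

lemma angle_mem_angleSet {S : Set Pt} {x y z : Pt} (hx : x ∈ S) (hy : y ∈ S) (hz : z ∈ S)
    (h : ¬Collinear ℝ {x, y, z}) : ∠ x y z ∈ angleSet S :=
  ⟨⟨angle_pos_of_not_collinear h, angle_lt_pi_of_not_collinear h⟩, x, hx, y, hy, z, hz,
    ne₁₂_of_not_collinear h, ne₂₃_of_not_collinear h, ne₁₃_of_not_collinear h, rfl⟩

section FewAngles

variable {S : Set Pt} (hS : S.Finite) (hπ : π / 3 ∈ angleSet S)
  (hcard : (angleSet S).ncard ≤ 2)
include hS hπ hcard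

lemma angle_eq_pi_div_three_of_ncard_angleSet_le_two {x y z : Pt} (hx : x ∈ S) (hy : y ∈ S)
    (hz : z ∈ S) (h : ¬Collinear ℝ {x, y, z}) : ∠ x y z = π / 3 := by
  by_contra hne
  have hxyz := angle_mem_angleSet hx hy hz h
  have htwo : ∀ θ ∈ angleSet S, θ = π / 3 ∨ θ = ∠ x y z := by
    intro θ hθ
    by_contra! h3
    have := (Set.two_lt_ncard_iff (angleSet_finite hS)).mpr
      ⟨_, _, _, hπ, hxyz, hθ, Ne.symm hne, h3.1.symm, h3.2.symm⟩
    omega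
  have hyzx := htwo _ <| angle_mem_angleSet hy hz hx <| by
    rwa [Set.pair_comm z x, Set.insert_comm y x]
  have hzxy := htwo _ <| angle_mem_angleSet hz hx hy <| by
    rwa [Set.insert_comm z x, Set.pair_comm z y]
  have hsum := angle_add_angle_add_angle_eq_pi x (ne₂₃_of_not_collinear h).symm
  apply hne
  rcases hyzx with h' | h' <;> rcases hzxy with h'' | h'' <;> linarith

lemma dist_eq_of_ncard_angleSet_le_two {x y z : Pt} (hx : x ∈ S) (hy : y ∈ S) (hz : z ∈ S)
    (h : ¬Collinear ℝ {x, y, z}) : dist x y = dist x z := by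
  have hy' := angle_eq_pi_div_three_of_ncard_angleSet_le_two hS hπ hcard hx hy hz h
  have hz' := angle_eq_pi_div_three_of_ncard_angleSet_le_two hS hπ hcard hx hz hy
    (by rwa [Set.pair_comm z y])
  have hx' := angle_eq_pi_div_three_of_ncard_angleSet_le_two hS hπ hcard hy hx hz
    (by rwa [Set.insert_comm y x])
  refine dist_eq_of_angle_eq_angle_of_angle_ne_pi (hy'.trans hz'.symm) ?_
  rw [hx']
  linarith [pi_pos]

lemma dist_eq_of_ncard_angleSet_le_two_of_ne {x y z p : Pt} (hx : x ∈ S) (hy : y ∈ S)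
    (hz : z ∈ S) (hp : p ∈ S) (hxyz : ¬Collinear ℝ {x, y, z}) (hpx : p ≠ x)
    (hyz : dist x y = dist x z) : dist x p = dist x y := by
  rcases not_collinear_or_not_collinear hxyz hpx with h | h
  · exact (dist_eq_of_ncard_angleSet_le_two hS hπ hcard hx hy hp h).symm
  · rw [hyz]
    exact (dist_eq_of_ncard_angleSet_le_two hS hπ hcard hx hz hp h).symm

end FewAngles

theorem stmt0_general (a b c p : Pt)
    (hab : a ≠ b)
    (h1 : dist a b = dist b c) (h2 : dist b c = dist c a)
    (hpa : p ≠ a) (hpb : p ≠ b) (hpc : p ≠ c) :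
    3 ≤ (angleSet {a, b, c, p}).ncard := by
  set S : Set Pt := {a, b, c, p}
  obtain ⟨ha, hb, hc, hp⟩ : a ∈ S ∧ b ∈ S ∧ c ∈ S ∧ p ∈ S := by simp [S]
  have habc : ¬Collinear ℝ {a, b, c} := not_collinear_of_dist_eq hab h1 h2
  have hπ : π / 3 ∈ angleSet S :=
    angle_eq_pi_div_three_of_dist_eq hab h1 h2 ▸ angle_mem_angleSet ha hb hc habc
  by_contra! hcard
  have hside := @dist_eq_of_ncard_angleSet_le_two_of_ne S (Set.toFinite S) hπ (by omega)
  have hap : dist a p = dist a b := hside ha hb hc hp habc hpa (by rw [h1, h2, dist_comm])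
  have hbp : dist b p = dist b a :=
    hside hb ha hc hp (by rwa [Set.insert_comm b a]) hpb (by rw [dist_comm, h1])
  have hcp : dist c p = dist c a :=
    hside hc ha hb hp (by rwa [Set.insert_comm c a, Set.pair_comm c b]) hpc
      (by rw [← h2, dist_comm])
  refine hab (eq_of_pairwise_dist_eq (c := c) ?_ h1.symm hap ?_ ?_)
  · rw [h1, h2, dist_comm]
  · rw [hbp, dist_comm]
  · rw [hcp, ← h2, ← h1]

theorem stmt0 (a b c p : Pt)
    (hab : a ≠ b) (hbc : b ≠ c) (hca : c ≠ a)
    (h1 : dist a b = dist b c) (h2 : dist b c = dist c a)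
    (hpa : p ≠ a) (hpb : p ≠ b) (hpc : p ≠ c) :
    3 ≤ (angleSet {a, b, c, p}).ncard :=
  stmt0_general a b c p hab h1 h2 hpa hpb hpc
end
end

section
/- If P ⊆ ℝ² is a set of points, not all collinear, such that every triple of distinct points in P determines only the single angle value π/3 (i.e., A(P) = 1 with the only angle π/3), then #P ≤ 3. Equivalently, P(1) = 3: the largest non-collinear planar point set determining at most one distinct angle in (0,π) has exactly 3 points, achieved by the equilateral triangle. -/
open EuclideanGeometry

noncomputable section

/-!
Among four points with all angles equal to `π / 3`, the three vectors from one of them to the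
others are pairwise at angle `π / 3`. Normalised to unit length, their Gram matrix is
`[[1, 1/2, 1/2], [1/2, 1, 1/2], [1/2, 1/2, 1]]`, which is nonsingular, so they are linearly
independent: impossible in the plane. Conversely, by the law of cosines every angle of an
equilateral triangle is `π / 3`.
-/

open Real RealInnerProductSpace Module

section

variable {V P : Type*} [NormedAddCommGroup V] [InnerProductSpace ℝ V] [MetricSpace P]
  [NormedAddTorsor V P]

theorem inner_eq_of_angle_eq_pi_div_three {u v : V}
    (h : InnerProductGeometry.angle u v = π / 3) : ⟪u, v⟫ = ‖u‖ * ‖v‖ / 2 := by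
  rw [← InnerProductGeometry.cos_angle_mul_norm_mul_norm, h, cos_pi_div_three]
  ring

theorem linearIndependent_of_angle_eq_pi_div_three {u v w : V} (hu : u ≠ 0) (hv : v ≠ 0)
    (hw : w ≠ 0) (huv : InnerProductGeometry.angle u v = π / 3)
    (huw : InnerProductGeometry.angle u w = π / 3)
    (hvw : InnerProductGeometry.angle v w = π / 3) :
    LinearIndependent ℝ ![u, v, w] := by
  rw [Fintype.linearIndependent_iff]
  intro g hg
  simp only [Fin.sum_univ_three, Matrix.cons_val_zero, Matrix.cons_val_one,
    Matrix.cons_val_two, Matrix.head_cons, Matrix.tail_cons] at hg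
  have pair (x : V) : g 0 * ⟪u, x⟫ + g 1 * ⟪v, x⟫ + g 2 * ⟪w, x⟫ = 0 := by
    simpa only [inner_add_left, real_inner_smul_left, inner_zero_left] using
      congrArg (⟪·, x⟫) hg
  have gram (x y : V) (h : InnerProductGeometry.angle x y = π / 3) :
      ⟪x, y⟫ = ‖x‖ * ‖y‖ / 2 ∧ ⟪y, x⟫ = ‖x‖ * ‖y‖ / 2 :=
    ⟨inner_eq_of_angle_eq_pi_div_three h, real_inner_comm x y ▸ inner_eq_of_angle_eq_pi_div_three h⟩
  obtain ⟨guv, gvu⟩ := gram u v huv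
  obtain ⟨guw, gwu⟩ := gram u w huw
  obtain ⟨gvw, gwv⟩ := gram v w hvw
  set a := g 0 * ‖u‖
  set b := g 1 * ‖v‖
  set c := g 2 * ‖w‖
  have eu : ‖u‖ * (a + b / 2 + c / 2) = 0 := by
    linear_combination pair u - g 0 * real_inner_self_eq_norm_sq u - g 1 * gvu - g 2 * gwu
  have ev : ‖v‖ * (a / 2 + b + c / 2) = 0 := by
    linear_combination pair v - g 0 * guv - g 1 * real_inner_self_eq_norm_sq v - g 2 * gwv
  have ew : ‖w‖ * (a / 2 + b / 2 + c) = 0 := by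
    linear_combination pair w - g 0 * guw - g 1 * gvw - g 2 * real_inner_self_eq_norm_sq w
  rw [mul_eq_zero, or_iff_right (norm_ne_zero_iff.2 hu)] at eu
  rw [mul_eq_zero, or_iff_right (norm_ne_zero_iff.2 hv)] at ev
  rw [mul_eq_zero, or_iff_right (norm_ne_zero_iff.2 hw)] at ew
  have ha : a = 0 := by linarith
  have hb : b = 0 := by linarith
  have hc : c = 0 := by linarith
  intro i
  fin_cases i
  · exact (mul_eq_zero.1 ha).resolve_right (norm_ne_zero_iff.2 hu)
  · exact (mul_eq_zero.1 hb).resolve_right (norm_ne_zero_iff.2 hv)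
  · exact (mul_eq_zero.1 hc).resolve_right (norm_ne_zero_iff.2 hw)

theorem three_le_finrank_of_angle_eq_pi_div_three [FiniteDimensional ℝ V] {u v w : V}
    (hu : u ≠ 0) (hv : v ≠ 0) (hw : w ≠ 0) (huv : InnerProductGeometry.angle u v = π / 3)
    (huw : InnerProductGeometry.angle u w = π / 3)
    (hvw : InnerProductGeometry.angle v w = π / 3) : 3 ≤ finrank ℝ V := by
  simpa using
    (linearIndependent_of_angle_eq_pi_div_three hu hv hw huv huw hvw).fintype_card_le_finrank

theorem ncard_le_three_of_forall_angle_eq_pi_div_three [FiniteDimensional ℝ V]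
    (hV : finrank ℝ V ≤ 2) {S : Set P}
    (hS : ∀ x ∈ S, ∀ y ∈ S, ∀ z ∈ S, x ≠ y → y ≠ z → x ≠ z → ∠ x y z = π / 3) :
    S.ncard ≤ 3 := by
  by_contra! hcard
  obtain ⟨a, b, c, d, ha, hb, hc, hd, hab, hac, had, hbc, hbd, hcd⟩ :=
    (Set.three_lt_ncard_iff (Set.finite_of_ncard_pos (by omega))).1 hcard
  have := three_le_finrank_of_angle_eq_pi_div_three (vsub_ne_zero.2 hab.symm)
    (vsub_ne_zero.2 hac.symm) (vsub_ne_zero.2 had.symm)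
    (hS b hb a ha c hc hab.symm hac hbc) (hS b hb a ha d hd hab.symm had hbd)
    (hS c hc a ha d hd hac.symm had hcd)
  omega

theorem angle_eq_pi_div_three_of_pairwise_dist_eq {S : Set P} {r : ℝ}
    (hS : S.Pairwise fun x y => dist x y = r) :
    ∀ x ∈ S, ∀ y ∈ S, ∀ z ∈ S, x ≠ y → y ≠ z → x ≠ z → ∠ x y z = π / 3 := by
  intro x hx y hy z hz hxy hyz hxz
  have hr : r ≠ 0 := by
    rw [← hS hx hy hxy]
    exact dist_ne_zero.2 hxy
  have hlaw := law_cos x y z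
  rw [hS hx hy hxy, hS hz hy hyz.symm, hS hx hz hxz] at hlaw
  have hcos : cos (∠ x y z) = cos (π / 3) := by
    rw [cos_pi_div_three]
    field_simp at hlaw
    linarith
  exact injOn_cos ⟨angle_nonneg _ _ _, angle_le_pi _ _ _⟩
    ⟨by positivity, by linarith [pi_pos]⟩ hcos

theorem not_collinear_of_angle_eq_pi_div_three {x y z : P} (hxy : x ≠ y) (hzy : z ≠ y)
    (h : ∠ x y z = π / 3) : ¬ Collinear ℝ {x, y, z} := by
  rw [collinear_iff_eq_or_eq_or_angle_eq_zero_or_angle_eq_pi, h]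
  rintro (h | h | h | h)
  · exact hxy h
  · exact hzy h
  all_goals linarith [pi_pos]

end

theorem pt_eq_pt_iff {a b c d : ℝ} : pt a b = pt c d ↔ a = c ∧ b = d :=
  ⟨fun h => ⟨congrArg (· 0) h, congrArg (· 1) h⟩, fun ⟨hac, hbd⟩ => hac ▸ hbd ▸ rfl⟩

theorem dist_pt (a b c d : ℝ) : dist (pt a b) (pt c d) = √((a - c) ^ 2 + (b - d) ^ 2) := by
  simp [EuclideanSpace.dist_eq, Fin.sum_univ_two, pt, Real.dist_eq, sq_abs]

theorem pairwise_dist_pt_eq_one :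
    ({pt 0 0, pt 1 0, pt (1 / 2) (√3 / 2)} : Set Pt).Pairwise fun x y => dist x y = 1 := by
  have h3 : √3 ^ 2 = 3 := sq_sqrt (by norm_num)
  simp only [Set.pairwise_insert, Set.pairwise_singleton, Set.mem_insert_iff,
    Set.mem_singleton_iff, forall_eq_or_imp, forall_eq, dist_pt, sqrt_eq_one]
  refine ⟨⟨trivial, fun _ => ⟨?_, ?_⟩⟩, fun _ => ⟨?_, ?_⟩, fun _ => ⟨?_, ?_⟩⟩ <;>
    linarith

theorem stmt1 :
    (∀ P : Set Pt, ¬ Collinear ℝ P →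
      (∀ x ∈ P, ∀ y ∈ P, ∀ z ∈ P, x ≠ y → y ≠ z → x ≠ z → ∠ x y z = Real.pi / 3) →
      P.ncard ≤ 3) ∧
    (∃ P : Set Pt, ¬ Collinear ℝ P ∧
      (∀ x ∈ P, ∀ y ∈ P, ∀ z ∈ P, x ≠ y → y ≠ z → x ≠ z → ∠ x y z = Real.pi / 3) ∧
      P.ncard = 3) := by
  refine ⟨fun P _ hP => ncard_le_three_of_forall_angle_eq_pi_div_three
    finrank_euclideanSpace_fin.le hP, ?_⟩
  have hT := pairwise_dist_pt_eq_one
  have hA : pt 0 0 ≠ pt 1 0 := by norm_num [pt_eq_pt_iff]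
  have hB : pt 0 0 ≠ pt (1 / 2) (√3 / 2) := by norm_num [pt_eq_pt_iff]
  have hC : pt 1 0 ≠ pt (1 / 2) (√3 / 2) := by norm_num [pt_eq_pt_iff]
  have hangle := angle_eq_pi_div_three_of_pairwise_dist_eq hT
  refine ⟨_, ?_, hangle, Set.ncard_eq_three.2 ⟨_, _, _, hA, hB, hC, rfl⟩⟩
  exact not_collinear_of_angle_eq_pi_div_three hA hC.symm
    (hangle _ (by simp) _ (by simp) _ (by simp) hA hC hB)
end
end

section
/- There is no convex quadrilateral ABCD (vertices in cyclic order) with interior angles γ, γ, γ, β in cyclic order, γ ≠ π/2, γ ≠ β, that determines at most three distinct angle values in (0,π) among its four vertices. -/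
open EuclideanGeometry

noncomputable section

/-- A convex quadrilateral with vertices in cyclic order: the open diagonals meet and
no three consecutive vertices are collinear. -/
def ConvexQuad (A B C D : Pt) : Prop :=
  (∃ x, x ∈ openSegment ℝ A C ∧ x ∈ openSegment ℝ B D) ∧
  ¬ Collinear ℝ ({A, B, C} : Set Pt) ∧ ¬ Collinear ℝ ({B, C, D} : Set Pt) ∧
  ¬ Collinear ℝ ({C, D, A} : Set Pt) ∧ ¬ Collinear ℝ ({D, A, B} : Set Pt)


/-!
The two diagonals of a convex quadrilateral `ABCD` split each corner angle into two angles of the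
triangles `ABC`, `ACD`, `ABD`, `BCD`. With corner angles `γ, γ, γ, β` this gives eight positive
angles `a₁ + a₂ = b₁ + b₂ = c₁ + c₂ = γ`, `d₁ + d₂ = β`, tied together by the four triangle sums.
If only three angle values occur, they are `γ`, `β` and some `θ`; a piece of a `γ`-corner is
smaller than `γ` and a piece of the `β`-corner smaller than `β`, so each piece has only two
possible values, and every one of the resulting linear systems forces `γ = β`.
-/

open EuclideanGeometry

theorem eq_of_split_angles {s γ β θ a₁ a₂ b₁ b₂ c₁ c₂ d₁ d₂ : ℝ}
    (ha₁ : a₁ = β ∨ a₁ = θ) (ha₂ : a₂ = β ∨ a₂ = θ) (hb₁ : b₁ = β ∨ b₁ = θ)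
    (hb₂ : b₂ = β ∨ b₂ = θ) (hc₁ : c₁ = β ∨ c₁ = θ) (hc₂ : c₂ = β ∨ c₂ = θ)
    (hd₁ : d₁ = γ ∨ d₁ = θ) (hd₂ : d₂ = γ ∨ d₂ = θ)
    (hA : a₁ + a₂ = γ) (hB : b₁ + b₂ = γ) (hC : c₁ + c₂ = γ) (hD : d₁ + d₂ = β)
    (hABC : γ + c₁ + a₁ = s) (hACD : c₂ + β + a₂ = s) (hABD : b₁ + d₂ + γ = s)
    (hBCD : γ + d₁ + b₂ = s) : γ = β := by
  -- The triangle sums at `B` and `D` give `b₁ - b₂ = d₁ - d₂`. If `b₁ = b₂`, then `b₁ = γ / 2` and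
  -- `d₁ = β / 2`; unless `γ = β` this means `γ = 2β, θ = β / 2` or `β = 2γ, θ = γ / 2`.
  by_cases hb : b₁ = b₂
  · rcases hb₁ with hb₁ | hb₁ <;> rcases hd₁ with hd₁ | hd₁
    · linarith
    · rcases ha₁ with rfl | rfl <;> rcases ha₂ with rfl | rfl <;>
        rcases hc₁ with rfl | rfl <;> rcases hc₂ with rfl | rfl <;> linarith
    · rcases ha₁ with rfl | rfl <;> rcases ha₂ with rfl | rfl <;>
        rcases hc₁ with rfl | rfl <;> rcases hc₂ with rfl | rfl <;> linarith
    · linarith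
  · rcases hb₁ with rfl | rfl <;> rcases hb₂ with rfl | rfl <;> rcases hd₁ with rfl | rfl <;>
      rcases hd₂ with rfl | rfl <;> first | exact absurd rfl hb | linarith

theorem exists_forall_eq_or_eq_or_eq_of_ncard_le_three {α : Type*} {S : Set α} (hS : S.Finite)
    (h3 : S.ncard ≤ 3) {a b : α} (ha : a ∈ S) (hb : b ∈ S) (hab : a ≠ b) :
    ∃ c, ∀ x ∈ S, x = a ∨ x = b ∨ x = c := by
  have : Nonempty α := ⟨a⟩
  have hrest : (S \ {a, b}).ncard ≤ 1 := by
    rw [Set.ncard_sdiff (by simp [Set.insert_subset_iff, ha, hb]), Set.ncard_pair hab]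
    omega
  obtain ⟨c, hc⟩ := (Set.ncard_le_one_iff_subset_singleton hS.sdiff).1 hrest
  exact ⟨c, fun x hx =>
    or_assoc.1 (or_iff_not_imp_left.2 fun hxab => hc ⟨hx, by simpa using hxab⟩)⟩

theorem eq_of_split_angles_of_ncard_le_three {S : Set ℝ} (hS : S.Finite) (h3 : S.ncard ≤ 3)
    (hpos : ∀ x ∈ S, 0 < x) {s γ β a₁ a₂ b₁ b₂ c₁ c₂ d₁ d₂ : ℝ} (hγ : γ ∈ S) (hβ : β ∈ S)
    (ha₁ : a₁ ∈ S) (ha₂ : a₂ ∈ S) (hb₁ : b₁ ∈ S) (hb₂ : b₂ ∈ S) (hc₁ : c₁ ∈ S) (hc₂ : c₂ ∈ S)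
    (hd₁ : d₁ ∈ S) (hd₂ : d₂ ∈ S)
    (hA : a₁ + a₂ = γ) (hB : b₁ + b₂ = γ) (hC : c₁ + c₂ = γ) (hD : d₁ + d₂ = β)
    (hABC : γ + c₁ + a₁ = s) (hACD : c₂ + β + a₂ = s) (hABD : b₁ + d₂ + γ = s)
    (hBCD : γ + d₁ + b₂ = s) : γ = β := by
  by_contra hγβ
  obtain ⟨θ, hθ⟩ := exists_forall_eq_or_eq_or_eq_of_ncard_le_three hS h3 hγ hβ hγβ
  have below_γ : ∀ x ∈ S, ∀ y ∈ S, x + y = γ → x = β ∨ x = θ := fun x hx y hy hxy =>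
    (hθ x hx).resolve_left fun h => (hpos y hy).ne' (by linarith)
  have below_β : ∀ x ∈ S, ∀ y ∈ S, x + y = β → x = γ ∨ x = θ := fun x hx y hy hxy =>
    ((hθ x hx).imp_right fun h => h.resolve_left fun h => (hpos y hy).ne' (by linarith))
  exact hγβ (eq_of_split_angles (below_γ _ ha₁ _ ha₂ hA) (below_γ _ ha₂ _ ha₁ (by linarith))
    (below_γ _ hb₁ _ hb₂ hB) (below_γ _ hb₂ _ hb₁ (by linarith)) (below_γ _ hc₁ _ hc₂ hC)
    (below_γ _ hc₂ _ hc₁ (by linarith)) (below_β _ hd₁ _ hd₂ hD)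
    (below_β _ hd₂ _ hd₁ (by linarith)) hA hB hC hD hABC hACD hABD hBCD)

theorem angle_add_angle_eq_of_sbtw_of_sbtw {V P : Type*} [NormedAddCommGroup V]
    [InnerProductSpace ℝ V] [MetricSpace P] [NormedAddTorsor V P] {a b c d e : P}
    (hac : Sbtw ℝ a e c) (hbd : Sbtw ℝ b e d) : ∠ b a c + ∠ c a d = ∠ b a d := by
  rw [← hac.angle_eq_right b, angle_comm c a d, ← hac.angle_eq_right d, angle_comm d a e]
  exact angle_add_angle_eq_of_sbtw hbd

theorem sbtw_of_mem_openSegment {E : Type*} [AddCommGroup E] [Module ℝ E] {x y z : E}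
    (h : y ∈ openSegment ℝ x z) (hxz : x ≠ z) : Sbtw ℝ x y z := by
  rw [sbtw_iff_mem_image_Ioo_and_ne, ← openSegment_eq_image_lineMap]
  exact ⟨h, hxz⟩

theorem angle_mem_angleSet_s7 {P T : Set Pt} (x y z : Pt) (hT : ¬Collinear ℝ T)
    (hTxyz : T ⊆ {x, y, z}) (hxyz : {x, y, z} ⊆ P) : ∠ x y z ∈ angleSet P := by
  have h : ¬Collinear ℝ {x, y, z} := mt (Collinear.subset hTxyz) hT
  refine ⟨⟨angle_pos_of_not_collinear h, angle_lt_pi_of_not_collinear h⟩, x, hxyz ?_, y, hxyz ?_,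
    z, hxyz ?_, ne₁₂_of_not_collinear h, ne₂₃_of_not_collinear h, ne₁₃_of_not_collinear h, rfl⟩ <;>
    simp

theorem Set.Finite.angleSet {P : Set Pt} (hP : P.Finite) : (angleSet P).Finite := by
  refine ((hP.prod (hP.prod hP)).image fun p => ∠ p.1 p.2.1 p.2.2).subset ?_
  rintro _ ⟨-, x, hx, y, hy, z, hz, -, -, -, rfl⟩
  exact ⟨(x, y, z), ⟨hx, hy, hz⟩, rfl⟩

theorem ConvexQuad.eq_of_ncard_angleSet_le_three {A B C D : Pt} {γ β : ℝ}
    (hQ : ConvexQuad A B C D) (hA : ∠ D A B = γ) (hB : ∠ A B C = γ) (hC : ∠ B C D = γ)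
    (hD : ∠ C D A = β) (h3 : (angleSet {A, B, C, D}).ncard ≤ 3) : γ = β := by
  obtain ⟨⟨E, hEAC, hEBD⟩, nABC, nBCD, nCDA, nDAB⟩ := hQ
  have hAB := ne₁₂_of_not_collinear nABC
  have hBC := ne₂₃_of_not_collinear nABC
  have hAC := ne₁₃_of_not_collinear nABC
  have hAEC := sbtw_of_mem_openSegment hEAC hAC
  have hBED := sbtw_of_mem_openSegment hEBD (ne₁₃_of_not_collinear nBCD)
  refine eq_of_split_angles_of_ncard_le_three (s := Real.pi) (Set.toFinite _).angleSet h3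
    (fun x hx => hx.1.1) (hA ▸ angle_mem_angleSet_s7 D A B nDAB ?_ ?_)
    (hD ▸ angle_mem_angleSet_s7 C D A nCDA ?_ ?_) (angle_mem_angleSet_s7 B A C nABC ?_ ?_)
    (angle_mem_angleSet_s7 C A D nCDA ?_ ?_) (angle_mem_angleSet_s7 A B D nDAB ?_ ?_)
    (angle_mem_angleSet_s7 D B C nBCD ?_ ?_) (angle_mem_angleSet_s7 B C A nABC ?_ ?_)
    (angle_mem_angleSet_s7 A C D nCDA ?_ ?_) (angle_mem_angleSet_s7 C D B nBCD ?_ ?_)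
    (angle_mem_angleSet_s7 B D A nDAB ?_ ?_)
    ((angle_add_angle_eq_of_sbtw_of_sbtw hAEC hBED).trans ((angle_comm B A D).trans hA))
    ((angle_add_angle_eq_of_sbtw_of_sbtw hBED hAEC).trans hB)
    ((angle_add_angle_eq_of_sbtw_of_sbtw hAEC.symm hBED).trans hC)
    ((angle_add_angle_eq_of_sbtw_of_sbtw hBED.symm hAEC.symm).trans hD)
    (by rw [← hB, ← angle_comm C A B]; exact angle_add_angle_add_angle_eq_pi C hAB.symm)
    (by rw [← hD, ← angle_comm D A C]; exact angle_add_angle_add_angle_eq_pi D hAC.symm)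
    (by rw [← hA]; exact angle_add_angle_add_angle_eq_pi D hAB.symm)
    (by rw [← hC]; exact angle_add_angle_add_angle_eq_pi D hBC.symm)
  all_goals simp [Set.insert_subset_iff]

theorem stmt7 : ¬ ∃ (A B C D : Pt) (γ β : ℝ), ConvexQuad A B C D ∧
    ∠ D A B = γ ∧ ∠ A B C = γ ∧ ∠ B C D = γ ∧ ∠ C D A = β ∧
    γ ≠ Real.pi / 2 ∧ γ ≠ β ∧ (angleSet {A, B, C, D}).ncard ≤ 3 := by
  rintro ⟨A, B, C, D, γ, β, hQ, hA, hB, hC, hD, -, hγβ, h3⟩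
  exact hγβ (hQ.eq_of_ncard_angleSet_le_three hA hB hC hD h3)
end
end

section
/- Let P be a set of five points A, B, C, D, E in ℝ² such that the convex hull of P is the triangle ABC and no four points of P are in convex position. Then one of the following holds: (a) D and E both lie on a single edge of triangle ABC; (b) one of D, E lies on an edge of ABC and the other lies on the open segment joining that point to the opposite vertex; (c) both D and E lie in the open interior of ABC and are collinear with one of A, B, C. -/
open EuclideanGeometry

noncomputable section

/-! ### Auxiliary lemmas -/

lemma aff3 (f : Pt →ᵃ[ℝ] ℝ) (a b c : ℝ) (p q r : Pt) (h : a + b + c = 1) :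
    f (a • p + b • q + c • r) = a * f p + b * f q + c * f r := by
  have ha : a = 1 - b - c := by linarith
  subst ha
  have h1 : (1 - b - c) • p + b • q + c • r = (b • (q - p) + c • (r - p)) +ᵥ p := by
    rw [vadd_eq_add]; module
  have h2 : f q = f.linear (q - p) + f p := by
    have := f.map_vadd p (q - p); rw [vadd_eq_add, sub_add_cancel] at this
    simpa [vadd_eq_add] using this
  have h3 : f r = f.linear (r - p) + f p := by
    have := f.map_vadd p (r - p); rw [vadd_eq_add, sub_add_cancel] at this
    simpa [vadd_eq_add] using this
  rw [h1, f.map_vadd]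
  simp only [vadd_eq_add, map_add, map_smul, smul_eq_mul, h2, h3]
  ring

lemma aff2 (f : Pt →ᵃ[ℝ] ℝ) (a b : ℝ) (p q : Pt) (h : a + b = 1) :
    f (a • p + b • q) = a * f p + b * f q := by
  have := aff3 f a b 0 p q q (by linarith)
  simpa using this

lemma affline (f : Pt →ᵃ[ℝ] ℝ) (t : ℝ) (p q r : Pt) :
    f (p + t • (q - r)) = f p + t * (f q - f r) := by
  have h1 : p + t • (q - r) = (t • (q - r)) +ᵥ p := by rw [vadd_eq_add]; abel
  have h2 : f q = f.linear (q - r) + f r := by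
    have := f.map_vadd r (q - r); rw [vadd_eq_add, sub_add_cancel] at this
    simpa [vadd_eq_add] using this
  rw [h1, f.map_vadd]
  simp only [vadd_eq_add, map_smul, smul_eq_mul]
  rw [h2]; ring

lemma coordline (f : Pt →ᵃ[ℝ] ℝ) (t : ℝ) (q r : Pt) :
    f (t • (q - r) + r) = f r + t * (f q - f r) := by
  rw [add_comm]; exact affline f t r q r

lemma mem_hull3 {p q r x : Pt} :
    x ∈ convexHull ℝ ({p, q, r} : Set Pt) ↔
      ∃ a b c : ℝ, 0 ≤ a ∧ 0 ≤ b ∧ 0 ≤ c ∧ a + b + c = 1 ∧ a • p + b • q + c • r = x := by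
  rw [show ({p, q, r} : Set Pt) = insert p {q, r} from rfl,
    convexHull_insert ⟨q, by simp⟩, convexHull_pair]
  constructor
  · rintro hx
    rw [mem_convexJoin] at hx
    obtain ⟨p', hp', z, ⟨b', c', hb', hc', hbc', rfl⟩, ⟨a, t, ha, ht, hat, hx⟩⟩ := hx
    rw [Set.mem_singleton_iff] at hp'; subst hp'
    refine ⟨a, t * b', t * c', ha, by positivity, by positivity, by nlinarith, ?_⟩
    rw [← hx]; rw [smul_add, smul_smul, smul_smul]; abel
  · rintro ⟨a, b, c, ha, hb, hc, habc, rfl⟩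
    rw [mem_convexJoin]
    rcases eq_or_lt_of_le (add_nonneg hb hc) with h0 | h0
    · refine ⟨p, rfl, q, left_mem_segment ℝ q r, 1, 0, zero_le_one, le_refl 0, by ring, ?_⟩
      have hb0 : b = 0 := by linarith
      have hc0 : c = 0 := by linarith
      simp [hb0, hc0, ← habc, hb0, hc0]
    · refine ⟨p, rfl, (b / (b + c)) • q + (c / (b + c)) • r,
        ⟨b / (b + c), c / (b + c), by positivity, by positivity, by field_simp, rfl⟩,
        a, b + c, ha, le_of_lt h0, by linarith, ?_⟩
      have hb2 : (b + c) * (b / (b + c)) = b := by field_simp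
      have hc2 : (b + c) * (c / (b + c)) = c := by field_simp
      rw [smul_add, smul_smul, smul_smul, hb2, hc2, add_assoc]

/-- coordinate pattern for membership in a hull of two vertices and one extra point -/
def Qr (x1 x2 x3 y1 y2 y3 : ℝ) : Prop :=
  ∃ p q r : ℝ, 0 ≤ p ∧ 0 ≤ q ∧ 0 ≤ r ∧ p + q + r = 1 ∧
    x1 = p + r * y1 ∧ x2 = q + r * y2 ∧ x3 = r * y3

lemma Qr.swap {x1 x2 x3 y1 y2 y3 : ℝ} (h : Qr x1 x2 x3 y1 y2 y3) :
    Qr x2 x1 x3 y2 y1 y3 := by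
  obtain ⟨p, q, r, hp, hq, hr, hs, h1, h2, h3⟩ := h
  exact ⟨q, p, r, hq, hp, hr, by linarith, h2, h1, h3⟩

lemma elimVertex {dW dZ eW eZ p q r : ℝ} (hp : 0 ≤ p) (hq : 0 ≤ q) (hr : 0 ≤ r)
    (hsum : p + q + r = 1) (hdW : 0 ≤ dW) (hdZ : 0 ≤ dZ) (heW : 0 ≤ eW) (heZ : 0 ≤ eZ)
    (h1 : 0 = p + q * dW + r * eW) (h2 : 0 = q * dZ + r * eZ)
    (hD : ¬(dW = 0 ∧ dZ = 0)) (hE : ¬(eW = 0 ∧ eZ = 0)) : False := by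
  have hqdW : q * dW = 0 := by nlinarith [mul_nonneg hq hdW, mul_nonneg hr heW]
  have hreW : r * eW = 0 := by nlinarith [mul_nonneg hq hdW, mul_nonneg hr heW]
  have hqdZ : q * dZ = 0 := by nlinarith [mul_nonneg hq hdZ, mul_nonneg hr heZ]
  have hreZ : r * eZ = 0 := by nlinarith [mul_nonneg hq hdZ, mul_nonneg hr heZ]
  have hp0 : p = 0 := by nlinarith [mul_nonneg hq hdW, mul_nonneg hr heW]
  rcases eq_or_lt_of_le hq with hq0 | hq0
  · have hr1 : (0:ℝ) < r := by linarith
    exact hE ⟨by nlinarith, by nlinarith⟩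
  · exact hD ⟨by nlinarith, by nlinarith⟩

lemma core {d1 d2 d3 e1 e2 e3 p q r : ℝ} (hp : 0 ≤ p) (hq : 0 ≤ q)
    (h1 : d1 = p + r * e1) (h2 : d2 = q + r * e2) (h3 : d3 = r * e3)
    (hsign : 0 < (d2 * e3 - d3 * e2) * (d3 * e1 - d1 * e3)) : False := by
  subst h1 h2 h3
  nlinarith [mul_nonneg (mul_nonneg hp hq) (sq_nonneg e3), hsign]

lemma edge_helper {d1 d2 d3 e1 e2 e3 : ℝ} (hd1 : 0 < d1) (hd2 : 0 < d2) (hd3 : d3 = 0)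
    (he3 : 0 < e3)
    (hq1 : Qr d1 d3 d2 e1 e3 e2 ∨ Qr e1 e3 e2 d1 d3 d2)
    (hq2 : Qr d2 d3 d1 e2 e3 e1 ∨ Qr e2 e3 e1 d2 d3 d1)
    (hEC : ¬(e1 = 0 ∧ e2 = 0)) :
    ∃ v, 0 < v ∧ v < 1 ∧ e1 = v * d1 ∧ e2 = v * d2 := by
  rcases hq1 with ⟨p, q, r, hp, hq, hr, hs, h1, h2, h3⟩ | ⟨p, q, r, hp, hq, hr, hs, h1, h2, h3⟩
  · exfalso
    have hre3 : r * e3 = 0 := by nlinarith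
    have hr0 : r = 0 := by
      rcases mul_eq_zero.mp hre3 with h | h
      · exact h
      · linarith
    rw [hr0] at h3; simp at h3; linarith
  · rcases hq2 with ⟨p', q', r', hp', hq', hr', hs', h1', h2', h3'⟩ |
        ⟨p', q', r', hp', hq', hr', hs', h1', h2', h3'⟩
    · exfalso
      have hre3 : r' * e3 = 0 := by nlinarith
      have hr0 : r' = 0 := by
        rcases mul_eq_zero.mp hre3 with h | h
        · exact h
        · linarith
      rw [hr0] at h3'; simp at h3'; linarith
    · have hrr : r = r' := by nlinarith
      have hp0 : p = 0 := by nlinarith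
      have hp'0 : p' = 0 := by nlinarith
      have hrpos : 0 < r := by
        rcases eq_or_lt_of_le hr with h | h
        · exfalso; exact hEC ⟨by nlinarith, by nlinarith⟩
        · exact h
      refine ⟨r, hrpos, ?_, by linarith, by rw [hrr]; linarith⟩
      have : q = e3 := by rw [hd3] at h2; linarith
      linarith

lemma interior_arith {d1 d2 d3 e1 e2 e3 : ℝ}
    (hα : d2 * e3 ≠ d3 * e2) (hβ : d3 * e1 ≠ d1 * e3) (hγ : d1 * e2 ≠ d2 * e1)
    (hq3 : Qr d1 d2 d3 e1 e2 e3 ∨ Qr e1 e2 e3 d1 d2 d3)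
    (hq1 : Qr d2 d3 d1 e2 e3 e1 ∨ Qr e2 e3 e1 d2 d3 d1)
    (hq2 : Qr d3 d1 d2 e3 e1 e2 ∨ Qr e3 e1 e2 d3 d1 d2) : False := by
  have hα' : d2 * e3 - d3 * e2 ≠ 0 := sub_ne_zero.mpr hα
  have hβ' : d3 * e1 - d1 * e3 ≠ 0 := sub_ne_zero.mpr hβ
  have hγ' : d1 * e2 - d2 * e1 ≠ 0 := sub_ne_zero.mpr hγ
  have hprod : 0 < (d2 * e3 - d3 * e2) * (d3 * e1 - d1 * e3) ∨
      0 < (d3 * e1 - d1 * e3) * (d1 * e2 - d2 * e1) ∨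
      0 < (d1 * e2 - d2 * e1) * (d2 * e3 - d3 * e2) := by
    rcases hα'.lt_or_gt with h1 | h1 <;> rcases hβ'.lt_or_gt with h2 | h2 <;>
      rcases hγ'.lt_or_gt with h3 | h3
    · exact Or.inl (mul_pos_of_neg_of_neg h1 h2)
    · exact Or.inl (mul_pos_of_neg_of_neg h1 h2)
    · exact Or.inr (Or.inr (mul_pos_of_neg_of_neg h3 h1))
    · exact Or.inr (Or.inl (mul_pos h2 h3))
    · exact Or.inr (Or.inl (mul_pos_of_neg_of_neg h2 h3))
    · exact Or.inr (Or.inr (mul_pos h3 h1))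
    · exact Or.inl (mul_pos h1 h2)
    · exact Or.inl (mul_pos h1 h2)
  rcases hprod with h | h | h
  · rcases hq3 with ⟨p, q, r, hp, hq, hr, hs, h1, h2, h3⟩ | ⟨p, q, r, hp, hq, hr, hs, h1, h2, h3⟩
    · exact core hp hq h1 h2 h3 h
    · exact core hp hq h1 h2 h3 (by nlinarith)
  · rcases hq1 with ⟨p, q, r, hp, hq, hr, hs, h1, h2, h3⟩ | ⟨p, q, r, hp, hq, hr, hs, h1, h2, h3⟩
    · exact core hp hq h1 h2 h3 (by nlinarith)
    · exact core hp hq h1 h2 h3 (by nlinarith)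
  · rcases hq2 with ⟨p, q, r, hp, hq, hr, hs, h1, h2, h3⟩ | ⟨p, q, r, hp, hq, hr, hs, h1, h2, h3⟩
    · exact core hp hq h1 h2 h3 (by nlinarith)
    · exact core hp hq h1 h2 h3 (by nlinarith)

lemma key {d1 d2 d3 e1 e2 e3 : ℝ}
    (hd1 : 0 ≤ d1) (hd2 : 0 ≤ d2) (hd3 : 0 ≤ d3)
    (he1 : 0 ≤ e1) (he2 : 0 ≤ e2) (he3 : 0 ≤ e3)
    (hDA : ¬(d2 = 0 ∧ d3 = 0)) (hDB : ¬(d1 = 0 ∧ d3 = 0)) (hDC : ¬(d1 = 0 ∧ d2 = 0))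
    (hEA : ¬(e2 = 0 ∧ e3 = 0)) (hEB : ¬(e1 = 0 ∧ e3 = 0)) (hEC : ¬(e1 = 0 ∧ e2 = 0))
    (hq3 : Qr d1 d2 d3 e1 e2 e3 ∨ Qr e1 e2 e3 d1 d2 d3)
    (hq1 : Qr d2 d3 d1 e2 e3 e1 ∨ Qr e2 e3 e1 d2 d3 d1)
    (hq2 : Qr d3 d1 d2 e3 e1 e2 ∨ Qr e3 e1 e2 d3 d1 d2) :
    (d3 = 0 ∧ e3 = 0) ∨ (d1 = 0 ∧ e1 = 0) ∨ (d2 = 0 ∧ e2 = 0) ∨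
    (d3 = 0 ∧ ∃ v, 0 < v ∧ v < 1 ∧ e1 = v * d1 ∧ e2 = v * d2) ∨
    (d1 = 0 ∧ ∃ v, 0 < v ∧ v < 1 ∧ e2 = v * d2 ∧ e3 = v * d3) ∨
    (d2 = 0 ∧ ∃ v, 0 < v ∧ v < 1 ∧ e3 = v * d3 ∧ e1 = v * d1) ∨
    (e3 = 0 ∧ ∃ v, 0 < v ∧ v < 1 ∧ d1 = v * e1 ∧ d2 = v * e2) ∨
    (e1 = 0 ∧ ∃ v, 0 < v ∧ v < 1 ∧ d2 = v * e2 ∧ d3 = v * e3) ∨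
    (e2 = 0 ∧ ∃ v, 0 < v ∧ v < 1 ∧ d3 = v * e3 ∧ d1 = v * e1) ∨
    (0 < d1 ∧ 0 < d2 ∧ 0 < d3 ∧ 0 < e1 ∧ 0 < e2 ∧ 0 < e3 ∧
      (d2 * e3 = d3 * e2 ∨ d3 * e1 = d1 * e3 ∨ d1 * e2 = d2 * e1)) := by
  by_cases h3 : d3 = 0
  · have hd1' : 0 < d1 := lt_of_le_of_ne hd1 (fun h => hDB ⟨h.symm, h3⟩)
    have hd2' : 0 < d2 := lt_of_le_of_ne hd2 (fun h => hDA ⟨h.symm, h3⟩)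
    by_cases he3' : e3 = 0
    · exact Or.inl ⟨h3, he3'⟩
    · have he3p : 0 < e3 := lt_of_le_of_ne he3 (Ne.symm he3')
      refine Or.inr (Or.inr (Or.inr (Or.inl ⟨h3, ?_⟩)))
      exact edge_helper hd1' hd2' h3 he3p (hq2.imp Qr.swap Qr.swap) hq1 hEC
  by_cases h1 : d1 = 0
  · have hd2' : 0 < d2 := lt_of_le_of_ne hd2 (fun h => hDC ⟨h1, h.symm⟩)
    have hd3' : 0 < d3 := lt_of_le_of_ne hd3 (Ne.symm h3)
    by_cases he1' : e1 = 0
    · exact Or.inr (Or.inl ⟨h1, he1'⟩)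
    · have he1p : 0 < e1 := lt_of_le_of_ne he1 (Ne.symm he1')
      refine Or.inr (Or.inr (Or.inr (Or.inr (Or.inl ⟨h1, ?_⟩))))
      exact edge_helper hd2' hd3' h1 he1p (hq3.imp Qr.swap Qr.swap) hq2
        (fun h => hEA ⟨h.1, h.2⟩)
  by_cases h2 : d2 = 0
  · have hd3' : 0 < d3 := lt_of_le_of_ne hd3 (Ne.symm h3)
    have hd1' : 0 < d1 := lt_of_le_of_ne hd1 (Ne.symm h1)
    by_cases he2' : e2 = 0
    · exact Or.inr (Or.inr (Or.inl ⟨h2, he2'⟩))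
    · have he2p : 0 < e2 := lt_of_le_of_ne he2 (Ne.symm he2')
      refine Or.inr (Or.inr (Or.inr (Or.inr (Or.inr (Or.inl ⟨h2, ?_⟩)))))
      exact edge_helper hd3' hd1' h2 he2p (hq1.imp Qr.swap Qr.swap) hq3
        (fun h => hEB ⟨h.2, h.1⟩)
  have hd1' : 0 < d1 := lt_of_le_of_ne hd1 (Ne.symm h1)
  have hd2' : 0 < d2 := lt_of_le_of_ne hd2 (Ne.symm h2)
  have hd3' : 0 < d3 := lt_of_le_of_ne hd3 (Ne.symm h3)
  by_cases k3 : e3 = 0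
  · have he1' : 0 < e1 := lt_of_le_of_ne he1 (fun h => hEB ⟨h.symm, k3⟩)
    have he2' : 0 < e2 := lt_of_le_of_ne he2 (fun h => hEA ⟨h.symm, k3⟩)
    refine Or.inr (Or.inr (Or.inr (Or.inr (Or.inr (Or.inr (Or.inl ⟨k3, ?_⟩))))))
    exact edge_helper he1' he2' k3 hd3'
      ((hq2.imp Qr.swap Qr.swap).symm) hq1.symm hDC
  by_cases k1 : e1 = 0
  · have he2' : 0 < e2 := lt_of_le_of_ne he2 (fun h => hEC ⟨k1, h.symm⟩)
    have he3' : 0 < e3 := lt_of_le_of_ne he3 (Ne.symm k3)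
    refine Or.inr (Or.inr (Or.inr (Or.inr (Or.inr (Or.inr (Or.inr (Or.inl ⟨k1, ?_⟩)))))))
    exact edge_helper he2' he3' k1 hd1'
      ((hq3.imp Qr.swap Qr.swap).symm) hq2.symm (fun h => hDA ⟨h.1, h.2⟩)
  by_cases k2 : e2 = 0
  · have he3' : 0 < e3 := lt_of_le_of_ne he3 (Ne.symm k3)
    have he1' : 0 < e1 := lt_of_le_of_ne he1 (Ne.symm k1)
    refine Or.inr (Or.inr (Or.inr (Or.inr (Or.inr (Or.inr (Or.inr (Or.inr (Or.inl ⟨k2, ?_⟩))))))))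
    exact edge_helper he3' he1' k2 hd2'
      ((hq1.imp Qr.swap Qr.swap).symm) hq3.symm (fun h => hDB ⟨h.2, h.1⟩)
  have he1' : 0 < e1 := lt_of_le_of_ne he1 (Ne.symm k1)
  have he2' : 0 < e2 := lt_of_le_of_ne he2 (Ne.symm k2)
  have he3' : 0 < e3 := lt_of_le_of_ne he3 (Ne.symm k3)
  refine Or.inr (Or.inr (Or.inr (Or.inr (Or.inr (Or.inr (Or.inr (Or.inr (Or.inr
    ⟨hd1', hd2', hd3', he1', he2', he3', ?_⟩))))))))
  by_contra hcon
  push_neg at hcon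
  exact interior_arith hcon.1 hcon.2.1 hcon.2.2 hq3 hq1 hq2

lemma ncard4 (p q r s : Pt) : ({p, q, r, s} : Set Pt).ncard ≤ 4 := by
  have h1 := Set.ncard_insert_le p ({q, r, s} : Set Pt)
  have h2 := Set.ncard_insert_le q ({r, s} : Set Pt)
  have h3 := Set.ncard_insert_le r ({s} : Set Pt)
  have h4 : ({s} : Set Pt).ncard = 1 := Set.ncard_singleton s
  omega

lemma ext3 (b : AffineBasis (Fin 3) ℝ Pt) {x y : Pt}
    (h0 : b.coord 0 x = b.coord 0 y) (h1 : b.coord 1 x = b.coord 1 y)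
    (h2 : b.coord 2 x = b.coord 2 y) : x = y := by
  apply b.ext_elem
  intro i
  fin_cases i
  · exact h0
  · exact h1
  · exact h2

lemma tr3 (b : AffineBasis (Fin 3) ℝ Pt) {x p q r : Pt}
    (h : x ∈ convexHull ℝ ({p, q, r} : Set Pt)) :
    ∃ u v w : ℝ, 0 ≤ u ∧ 0 ≤ v ∧ 0 ≤ w ∧ u + v + w = 1 ∧
      ∀ i, b.coord i x = u * b.coord i p + v * b.coord i q + w * b.coord i r := by
  obtain ⟨u, v, w, hu, hv, hw, hs, heq⟩ := mem_hull3.mp h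
  exact ⟨u, v, w, hu, hv, hw, hs, fun i => heq ▸ aff3 (b.coord i) u v w p q r hs⟩

lemma mk2seg (b : AffineBasis (Fin 3) ℝ Pt) (x p q : Pt) (u v : ℝ)
    (hu : 0 < u) (hv : 0 < v) (hs : u + v = 1)
    (h0 : b.coord 0 x = u * b.coord 0 p + v * b.coord 0 q)
    (h1 : b.coord 1 x = u * b.coord 1 p + v * b.coord 1 q)
    (h2 : b.coord 2 x = u * b.coord 2 p + v * b.coord 2 q) :
    x ∈ openSegment ℝ p q := by
  refine ⟨u, v, hu, hv, hs, ?_⟩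
  apply ext3 b <;> rw [aff2 _ _ _ _ _ hs]
  · exact h0.symm
  · exact h1.symm
  · exact h2.symm

lemma collinear3 (V D E : Pt) (t : ℝ) (h : E = t • (D - V) + V) :
    Collinear ℝ ({V, D, E} : Set Pt) := by
  rw [collinear_iff_of_mem (Set.mem_insert V {D, E})]
  refine ⟨D - V, ?_⟩
  intro x hx
  simp only [Set.mem_insert_iff, Set.mem_singleton_iff] at hx
  rcases hx with rfl | rfl | rfl
  · exact ⟨0, by simp⟩
  · exact ⟨1, by rw [vadd_eq_add, one_smul, sub_add_cancel]⟩
  · exact ⟨t, by rw [vadd_eq_add, ← h]⟩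

lemma interior_mem (b : AffineBasis (Fin 3) ℝ Pt) {x : Pt}
    (h0 : 0 < b.coord 0 x) (h1 : 0 < b.coord 1 x) (h2 : 0 < b.coord 2 x) :
    x ∈ interior (convexHull ℝ (Set.range ⇑b)) := by
  rw [b.interior_convexHull]
  intro i
  fin_cases i
  · exact h0
  · exact h1
  · exact h2

set_option maxHeartbeats 2000000 in
theorem stmt9 (A B C D E : Pt)
    (hind : AffineIndependent ℝ ![A, B, C])
    (hdist : ({A, B, C, D, E} : Set Pt).ncard = 5)
    (hhull : convexHull ℝ ({A, B, C, D, E} : Set Pt) = convexHull ℝ ({A, B, C} : Set Pt))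
    (hno4 : ∀ w ∈ ({A, B, C, D, E} : Set Pt), ∀ x ∈ ({A, B, C, D, E} : Set Pt),
      ∀ y ∈ ({A, B, C, D, E} : Set Pt), ∀ z ∈ ({A, B, C, D, E} : Set Pt),
      w ≠ x → w ≠ y → w ≠ z → x ≠ y → x ≠ z → y ≠ z →
      ¬ (w ∉ convexHull ℝ ({x, y, z} : Set Pt) ∧ x ∉ convexHull ℝ ({w, y, z} : Set Pt) ∧
         y ∉ convexHull ℝ ({w, x, z} : Set Pt) ∧ z ∉ convexHull ℝ ({w, x, y} : Set Pt))) :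
    ((D ∈ openSegment ℝ A B ∧ E ∈ openSegment ℝ A B) ∨
     (D ∈ openSegment ℝ B C ∧ E ∈ openSegment ℝ B C) ∨
     (D ∈ openSegment ℝ A C ∧ E ∈ openSegment ℝ A C)) ∨
    ((D ∈ openSegment ℝ A B ∧ E ∈ openSegment ℝ C D) ∨
     (D ∈ openSegment ℝ B C ∧ E ∈ openSegment ℝ A D) ∨
     (D ∈ openSegment ℝ A C ∧ E ∈ openSegment ℝ B D) ∨
     (E ∈ openSegment ℝ A B ∧ D ∈ openSegment ℝ C E) ∨
     (E ∈ openSegment ℝ B C ∧ D ∈ openSegment ℝ A E) ∨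
     (E ∈ openSegment ℝ A C ∧ D ∈ openSegment ℝ B E)) ∨
    (D ∈ interior (convexHull ℝ ({A, B, C} : Set Pt)) ∧
     E ∈ interior (convexHull ℝ ({A, B, C} : Set Pt)) ∧
     (Collinear ℝ ({A, D, E} : Set Pt) ∨ Collinear ℝ ({B, D, E} : Set Pt) ∨
      Collinear ℝ ({C, D, E} : Set Pt))) := by
  classical
  -- pairwise distinctness
  have hAB : A ≠ B := by
    intro h
    have he : ({A, B, C, D, E} : Set Pt) = ({B, C, D, E} : Set Pt) := by
      rw [h]; ext x; simp only [Set.mem_insert_iff, Set.mem_singleton_iff]; tauto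
    rw [he] at hdist; have := ncard4 B C D E; omega
  have hAC : A ≠ C := by
    intro h
    have he : ({A, B, C, D, E} : Set Pt) = ({B, C, D, E} : Set Pt) := by
      rw [h]; ext x; simp only [Set.mem_insert_iff, Set.mem_singleton_iff]; tauto
    rw [he] at hdist; have := ncard4 B C D E; omega
  have hAD : A ≠ D := by
    intro h
    have he : ({A, B, C, D, E} : Set Pt) = ({B, C, D, E} : Set Pt) := by
      rw [h]; ext x; simp only [Set.mem_insert_iff, Set.mem_singleton_iff]; tauto
    rw [he] at hdist; have := ncard4 B C D E; omega
  have hAE : A ≠ E := by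
    intro h
    have he : ({A, B, C, D, E} : Set Pt) = ({B, C, D, E} : Set Pt) := by
      rw [h]; ext x; simp only [Set.mem_insert_iff, Set.mem_singleton_iff]; tauto
    rw [he] at hdist; have := ncard4 B C D E; omega
  have hBC : B ≠ C := by
    intro h
    have he : ({A, B, C, D, E} : Set Pt) = ({A, C, D, E} : Set Pt) := by
      rw [h]; ext x; simp only [Set.mem_insert_iff, Set.mem_singleton_iff]; tauto
    rw [he] at hdist; have := ncard4 A C D E; omega
  have hBD : B ≠ D := by
    intro h
    have he : ({A, B, C, D, E} : Set Pt) = ({A, C, D, E} : Set Pt) := by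
      rw [h]; ext x; simp only [Set.mem_insert_iff, Set.mem_singleton_iff]; tauto
    rw [he] at hdist; have := ncard4 A C D E; omega
  have hBE : B ≠ E := by
    intro h
    have he : ({A, B, C, D, E} : Set Pt) = ({A, C, D, E} : Set Pt) := by
      rw [h]; ext x; simp only [Set.mem_insert_iff, Set.mem_singleton_iff]; tauto
    rw [he] at hdist; have := ncard4 A C D E; omega
  have hCD : C ≠ D := by
    intro h
    have he : ({A, B, C, D, E} : Set Pt) = ({A, B, D, E} : Set Pt) := by
      rw [h]; ext x; simp only [Set.mem_insert_iff, Set.mem_singleton_iff]; tauto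
    rw [he] at hdist; have := ncard4 A B D E; omega
  have hCE : C ≠ E := by
    intro h
    have he : ({A, B, C, D, E} : Set Pt) = ({A, B, D, E} : Set Pt) := by
      rw [h]; ext x; simp only [Set.mem_insert_iff, Set.mem_singleton_iff]; tauto
    rw [he] at hdist; have := ncard4 A B D E; omega
  have hDE : D ≠ E := by
    intro h
    have he : ({A, B, C, D, E} : Set Pt) = ({A, B, C, E} : Set Pt) := by
      rw [h]; ext x; simp only [Set.mem_insert_iff, Set.mem_singleton_iff]; tauto
    rw [he] at hdist; have := ncard4 A B C E; omega
  -- the affine basis given by the triangle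
  have htop : affineSpan ℝ (Set.range ![A, B, C]) = ⊤ := by
    rw [hind.affineSpan_eq_top_iff_card_eq_finrank_add_one]; simp
  obtain ⟨b, hb⟩ : ∃ b : AffineBasis (Fin 3) ℝ Pt, ⇑b = ![A, B, C] :=
    ⟨⟨![A, B, C], hind, htop⟩, rfl⟩
  have hb0 : b 0 = A := by rw [hb]; rfl
  have hb1 : b 1 = B := by rw [hb]; rfl
  have hb2 : b 2 = C := by rw [hb]; rfl
  have cA0 : b.coord 0 A = 1 := by have h := b.coord_apply 0 0; rw [hb0] at h; simpa using h
  have cA1 : b.coord 1 A = 0 := by have h := b.coord_apply 1 0; rw [hb0] at h; simpa using h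
  have cA2 : b.coord 2 A = 0 := by have h := b.coord_apply 2 0; rw [hb0] at h; simpa using h
  have cB0 : b.coord 0 B = 0 := by have h := b.coord_apply 0 1; rw [hb1] at h; simpa using h
  have cB1 : b.coord 1 B = 1 := by have h := b.coord_apply 1 1; rw [hb1] at h; simpa using h
  have cB2 : b.coord 2 B = 0 := by have h := b.coord_apply 2 1; rw [hb1] at h; simpa using h
  have cC0 : b.coord 0 C = 0 := by have h := b.coord_apply 0 2; rw [hb2] at h; simpa using h
  have cC1 : b.coord 1 C = 0 := by have h := b.coord_apply 1 2; rw [hb2] at h; simpa using h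
  have cC2 : b.coord 2 C = 1 := by have h := b.coord_apply 2 2; rw [hb2] at h; simpa using h
  have hrange : Set.range ⇑b = ({A, B, C} : Set Pt) := by
    rw [hb]; ext x; simp; tauto
  -- coordinates of D and E
  obtain ⟨d0, hd0⟩ : ∃ t, b.coord 0 D = t := ⟨_, rfl⟩
  obtain ⟨d1, hd1⟩ : ∃ t, b.coord 1 D = t := ⟨_, rfl⟩
  obtain ⟨d2, hd2⟩ : ∃ t, b.coord 2 D = t := ⟨_, rfl⟩
  obtain ⟨e0, he0⟩ : ∃ t, b.coord 0 E = t := ⟨_, rfl⟩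
  obtain ⟨e1, he1⟩ : ∃ t, b.coord 1 E = t := ⟨_, rfl⟩
  obtain ⟨e2, he2⟩ : ∃ t, b.coord 2 E = t := ⟨_, rfl⟩
  have hsd : d0 + d1 + d2 = 1 := by
    have h := b.sum_coord_apply_eq_one D
    rwa [Fin.sum_univ_three, hd0, hd1, hd2] at h
  have hse : e0 + e1 + e2 = 1 := by
    have h := b.sum_coord_apply_eq_one E
    rwa [Fin.sum_univ_three, he0, he1, he2] at h
  have hDm : D ∈ convexHull ℝ ({A, B, C} : Set Pt) := by
    rw [← hhull]; exact subset_convexHull ℝ _ (by simp)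
  have hEm : E ∈ convexHull ℝ ({A, B, C} : Set Pt) := by
    rw [← hhull]; exact subset_convexHull ℝ _ (by simp)
  have hdnn : 0 ≤ d0 ∧ 0 ≤ d1 ∧ 0 ≤ d2 := by
    obtain ⟨u, v, w, hu, hv, hw, hs, hco⟩ := tr3 b hDm
    have h0 := hco 0; have h1 := hco 1; have h2 := hco 2
    rw [hd0, cA0, cB0, cC0] at h0
    rw [hd1, cA1, cB1, cC1] at h1
    rw [hd2, cA2, cB2, cC2] at h2
    simp only [mul_one, mul_zero, add_zero, zero_add] at h0 h1 h2
    exact ⟨by linarith, by linarith, by linarith⟩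
  have henn : 0 ≤ e0 ∧ 0 ≤ e1 ∧ 0 ≤ e2 := by
    obtain ⟨u, v, w, hu, hv, hw, hs, hco⟩ := tr3 b hEm
    have h0 := hco 0; have h1 := hco 1; have h2 := hco 2
    rw [he0, cA0, cB0, cC0] at h0
    rw [he1, cA1, cB1, cC1] at h1
    rw [he2, cA2, cB2, cC2] at h2
    simp only [mul_one, mul_zero, add_zero, zero_add] at h0 h1 h2
    exact ⟨by linarith, by linarith, by linarith⟩
  obtain ⟨hd0nn, hd1nn, hd2nn⟩ := hdnn
  obtain ⟨he0nn, he1nn, he2nn⟩ := henn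
  -- coordinate forms of distinctness
  have nDA : ¬(d1 = 0 ∧ d2 = 0) := by
    rintro ⟨u1, u2⟩
    exact hAD (ext3 b (by rw [cA0, hd0]; linarith) (by rw [cA1, hd1]; linarith)
      (by rw [cA2, hd2]; linarith))
  have nDB : ¬(d0 = 0 ∧ d2 = 0) := by
    rintro ⟨u1, u2⟩
    exact hBD (ext3 b (by rw [cB0, hd0]; linarith) (by rw [cB1, hd1]; linarith)
      (by rw [cB2, hd2]; linarith))
  have nDC : ¬(d0 = 0 ∧ d1 = 0) := by
    rintro ⟨u1, u2⟩
    exact hCD (ext3 b (by rw [cC0, hd0]; linarith) (by rw [cC1, hd1]; linarith)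
      (by rw [cC2, hd2]; linarith))
  have nEA : ¬(e1 = 0 ∧ e2 = 0) := by
    rintro ⟨u1, u2⟩
    exact hAE (ext3 b (by rw [cA0, he0]; linarith) (by rw [cA1, he1]; linarith)
      (by rw [cA2, he2]; linarith))
  have nEB : ¬(e0 = 0 ∧ e2 = 0) := by
    rintro ⟨u1, u2⟩
    exact hBE (ext3 b (by rw [cB0, he0]; linarith) (by rw [cB1, he1]; linarith)
      (by rw [cB2, he2]; linarith))
  have nEC : ¬(e0 = 0 ∧ e1 = 0) := by
    rintro ⟨u1, u2⟩
    exact hCE (ext3 b (by rw [cC0, he0]; linarith) (by rw [cC1, he1]; linarith)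
      (by rw [cC2, he2]; linarith))
  -- the three quadruple facts
  have quadABDE : A ∈ convexHull ℝ ({B, D, E} : Set Pt) ∨
      B ∈ convexHull ℝ ({A, D, E} : Set Pt) ∨ D ∈ convexHull ℝ ({A, B, E} : Set Pt) ∨
      E ∈ convexHull ℝ ({A, B, D} : Set Pt) := by
    by_contra hc; push_neg at hc
    exact hno4 A (by simp) B (by simp) D (by simp) E (by simp) hAB hAD hAE hBD hBE hDE
      ⟨hc.1, hc.2.1, hc.2.2.1, hc.2.2.2⟩
  have quadBCDE : B ∈ convexHull ℝ ({C, D, E} : Set Pt) ∨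
      C ∈ convexHull ℝ ({B, D, E} : Set Pt) ∨ D ∈ convexHull ℝ ({B, C, E} : Set Pt) ∨
      E ∈ convexHull ℝ ({B, C, D} : Set Pt) := by
    by_contra hc; push_neg at hc
    exact hno4 B (by simp) C (by simp) D (by simp) E (by simp) hBC hBD hBE hCD hCE hDE
      ⟨hc.1, hc.2.1, hc.2.2.1, hc.2.2.2⟩
  have quadACDE : A ∈ convexHull ℝ ({C, D, E} : Set Pt) ∨
      C ∈ convexHull ℝ ({A, D, E} : Set Pt) ∨ D ∈ convexHull ℝ ({A, C, E} : Set Pt) ∨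
      E ∈ convexHull ℝ ({A, C, D} : Set Pt) := by
    by_contra hc; push_neg at hc
    exact hno4 A (by simp) C (by simp) D (by simp) E (by simp) hAC hAD hAE hCD hCE hDE
      ⟨hc.1, hc.2.1, hc.2.2.1, hc.2.2.2⟩
  have hq3 : Qr d0 d1 d2 e0 e1 e2 ∨ Qr e0 e1 e2 d0 d1 d2 := by
    rcases quadABDE with h | h | h | h
    · exfalso
      obtain ⟨u, v, w, hu, hv, hw, hs, hco⟩ := tr3 b h
      have h1 := hco 1; have h2 := hco 2
      rw [cA1, cB1, hd1, he1] at h1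
      rw [cA2, cB2, hd2, he2] at h2
      exact elimVertex hu hv hw hs hd1nn hd2nn he1nn he2nn (by linarith) (by linarith) nDA nEA
    · exfalso
      obtain ⟨u, v, w, hu, hv, hw, hs, hco⟩ := tr3 b h
      have h0 := hco 0; have h2 := hco 2
      rw [cB0, cA0, hd0, he0] at h0
      rw [cB2, cA2, hd2, he2] at h2
      exact elimVertex hu hv hw hs hd0nn hd2nn he0nn he2nn (by linarith) (by linarith) nDB nEB
    · left
      obtain ⟨u, v, w, hu, hv, hw, hs, hco⟩ := tr3 b h
      have h0 := hco 0; have h1 := hco 1; have h2 := hco 2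
      rw [hd0, cA0, cB0, he0] at h0
      rw [hd1, cA1, cB1, he1] at h1
      rw [hd2, cA2, cB2, he2] at h2
      exact ⟨u, v, w, hu, hv, hw, hs, by linarith, by linarith, by linarith⟩
    · right
      obtain ⟨u, v, w, hu, hv, hw, hs, hco⟩ := tr3 b h
      have h0 := hco 0; have h1 := hco 1; have h2 := hco 2
      rw [he0, cA0, cB0, hd0] at h0
      rw [he1, cA1, cB1, hd1] at h1
      rw [he2, cA2, cB2, hd2] at h2
      exact ⟨u, v, w, hu, hv, hw, hs, by linarith, by linarith, by linarith⟩
  have hq1 : Qr d1 d2 d0 e1 e2 e0 ∨ Qr e1 e2 e0 d1 d2 d0 := by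
    rcases quadBCDE with h | h | h | h
    · exfalso
      obtain ⟨u, v, w, hu, hv, hw, hs, hco⟩ := tr3 b h
      have h2 := hco 2; have h0 := hco 0
      rw [cB2, cC2, hd2, he2] at h2
      rw [cB0, cC0, hd0, he0] at h0
      exact elimVertex hu hv hw hs hd2nn hd0nn he2nn he0nn (by linarith) (by linarith)
        (fun h' => nDB ⟨h'.2, h'.1⟩) (fun h' => nEB ⟨h'.2, h'.1⟩)
    · exfalso
      obtain ⟨u, v, w, hu, hv, hw, hs, hco⟩ := tr3 b h
      have h1 := hco 1; have h0 := hco 0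
      rw [cC1, cB1, hd1, he1] at h1
      rw [cC0, cB0, hd0, he0] at h0
      exact elimVertex hu hv hw hs hd1nn hd0nn he1nn he0nn (by linarith) (by linarith)
        (fun h' => nDC ⟨h'.2, h'.1⟩) (fun h' => nEC ⟨h'.2, h'.1⟩)
    · left
      obtain ⟨u, v, w, hu, hv, hw, hs, hco⟩ := tr3 b h
      have h0 := hco 0; have h1 := hco 1; have h2 := hco 2
      rw [hd0, cB0, cC0, he0] at h0
      rw [hd1, cB1, cC1, he1] at h1
      rw [hd2, cB2, cC2, he2] at h2
      exact ⟨u, v, w, hu, hv, hw, hs, by linarith, by linarith, by linarith⟩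
    · right
      obtain ⟨u, v, w, hu, hv, hw, hs, hco⟩ := tr3 b h
      have h0 := hco 0; have h1 := hco 1; have h2 := hco 2
      rw [he0, cB0, cC0, hd0] at h0
      rw [he1, cB1, cC1, hd1] at h1
      rw [he2, cB2, cC2, hd2] at h2
      exact ⟨u, v, w, hu, hv, hw, hs, by linarith, by linarith, by linarith⟩
  have hq2 : Qr d2 d0 d1 e2 e0 e1 ∨ Qr e2 e0 e1 d2 d0 d1 := by
    rcases quadACDE with h | h | h | h
    · exfalso
      obtain ⟨u, v, w, hu, hv, hw, hs, hco⟩ := tr3 b h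
      have h2 := hco 2; have h1 := hco 1
      rw [cA2, cC2, hd2, he2] at h2
      rw [cA1, cC1, hd1, he1] at h1
      exact elimVertex hu hv hw hs hd2nn hd1nn he2nn he1nn (by linarith) (by linarith)
        (fun h' => nDA ⟨h'.2, h'.1⟩) (fun h' => nEA ⟨h'.2, h'.1⟩)
    · exfalso
      obtain ⟨u, v, w, hu, hv, hw, hs, hco⟩ := tr3 b h
      have h0 := hco 0; have h1 := hco 1
      rw [cC0, cA0, hd0, he0] at h0
      rw [cC1, cA1, hd1, he1] at h1
      exact elimVertex hu hv hw hs hd0nn hd1nn he0nn he1nn (by linarith) (by linarith) nDC nEC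
    · left
      obtain ⟨u, v, w, hu, hv, hw, hs, hco⟩ := tr3 b h
      have h0 := hco 0; have h1 := hco 1; have h2 := hco 2
      rw [hd0, cA0, cC0, he0] at h0
      rw [hd1, cA1, cC1, he1] at h1
      rw [hd2, cA2, cC2, he2] at h2
      exact Qr.swap ⟨u, v, w, hu, hv, hw, hs, by linarith, by linarith, by linarith⟩
    · right
      obtain ⟨u, v, w, hu, hv, hw, hs, hco⟩ := tr3 b h
      have h0 := hco 0; have h1 := hco 1; have h2 := hco 2
      rw [he0, cA0, cC0, hd0] at h0
      rw [he1, cA1, cC1, hd1] at h1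
      rw [he2, cA2, cC2, hd2] at h2
      exact Qr.swap ⟨u, v, w, hu, hv, hw, hs, by linarith, by linarith, by linarith⟩
  -- apply the combinatorial key lemma
  rcases key hd0nn hd1nn hd2nn he0nn he1nn he2nn nDA nDB nDC nEA nEB nEC hq3 hq1 hq2 with
    hc | hc | hc | hc | hc | hc | hc | hc | hc | hc
  · -- both on AB
    refine Or.inl (Or.inl ⟨mk2seg b D A B d0 d1
      (lt_of_le_of_ne hd0nn (fun h => nDB ⟨h.symm, hc.1⟩))
      (lt_of_le_of_ne hd1nn (fun h => nDA ⟨h.symm, hc.1⟩)) (by linarith)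
      (by rw [hd0, cA0, cB0]; ring) (by rw [hd1, cA1, cB1]; ring)
      (by rw [hd2, cA2, cB2]; linarith [hc.1]), mk2seg b E A B e0 e1
      (lt_of_le_of_ne he0nn (fun h => nEB ⟨h.symm, hc.2⟩))
      (lt_of_le_of_ne he1nn (fun h => nEA ⟨h.symm, hc.2⟩)) (by linarith)
      (by rw [he0, cA0, cB0]; ring) (by rw [he1, cA1, cB1]; ring)
      (by rw [he2, cA2, cB2]; linarith [hc.2])⟩)
  · -- both on BC
    refine Or.inl (Or.inr (Or.inl ⟨mk2seg b D B C d1 d2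
      (lt_of_le_of_ne hd1nn (fun h => nDC ⟨hc.1, h.symm⟩))
      (lt_of_le_of_ne hd2nn (fun h => nDB ⟨hc.1, h.symm⟩)) (by linarith)
      (by rw [hd0, cB0, cC0]; linarith [hc.1]) (by rw [hd1, cB1, cC1]; ring)
      (by rw [hd2, cB2, cC2]; ring), mk2seg b E B C e1 e2
      (lt_of_le_of_ne he1nn (fun h => nEC ⟨hc.2, h.symm⟩))
      (lt_of_le_of_ne he2nn (fun h => nEB ⟨hc.2, h.symm⟩)) (by linarith)
      (by rw [he0, cB0, cC0]; linarith [hc.2]) (by rw [he1, cB1, cC1]; ring)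
      (by rw [he2, cB2, cC2]; ring)⟩))
  · -- both on AC
    refine Or.inl (Or.inr (Or.inr ⟨mk2seg b D A C d0 d2
      (lt_of_le_of_ne hd0nn (fun h => nDC ⟨h.symm, hc.1⟩))
      (lt_of_le_of_ne hd2nn (fun h => nDA ⟨hc.1, h.symm⟩)) (by linarith)
      (by rw [hd0, cA0, cC0]; ring) (by rw [hd1, cA1, cC1]; linarith [hc.1])
      (by rw [hd2, cA2, cC2]; ring), mk2seg b E A C e0 e2
      (lt_of_le_of_ne he0nn (fun h => nEC ⟨h.symm, hc.2⟩))
      (lt_of_le_of_ne he2nn (fun h => nEA ⟨hc.2, h.symm⟩)) (by linarith)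
      (by rw [he0, cA0, cC0]; ring) (by rw [he1, cA1, cC1]; linarith [hc.2])
      (by rw [he2, cA2, cC2]; ring)⟩))
  · -- D on AB, E on segment C D
    obtain ⟨hc2, v, hv0, hv1, hva, hvb⟩ := hc
    refine Or.inr (Or.inl (Or.inl ⟨mk2seg b D A B d0 d1
      (lt_of_le_of_ne hd0nn (fun h => nDB ⟨h.symm, hc2⟩))
      (lt_of_le_of_ne hd1nn (fun h => nDA ⟨h.symm, hc2⟩)) (by linarith)
      (by rw [hd0, cA0, cB0]; ring) (by rw [hd1, cA1, cB1]; ring)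
      (by rw [hd2, cA2, cB2]; linarith), mk2seg b E C D (1 - v) v
      (by linarith) hv0 (by ring)
      (by rw [he0, cC0, hd0]; linear_combination hva)
      (by rw [he1, cC1, hd1]; linear_combination hvb)
      (by rw [he2, cC2, hd2]; linear_combination (-1 : ℝ) * hva - hvb + hse - v * hsd)⟩))
  · -- D on BC, E on segment A D
    obtain ⟨hc2, v, hv0, hv1, hva, hvb⟩ := hc
    refine Or.inr (Or.inl (Or.inr (Or.inl ⟨mk2seg b D B C d1 d2
      (lt_of_le_of_ne hd1nn (fun h => nDC ⟨hc2, h.symm⟩))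
      (lt_of_le_of_ne hd2nn (fun h => nDB ⟨hc2, h.symm⟩)) (by linarith)
      (by rw [hd0, cB0, cC0]; linarith) (by rw [hd1, cB1, cC1]; ring)
      (by rw [hd2, cB2, cC2]; ring), mk2seg b E A D (1 - v) v
      (by linarith) hv0 (by ring)
      (by rw [he0, cA0, hd0]; linear_combination (-1 : ℝ) * hva - hvb + hse - v * hsd)
      (by rw [he1, cA1, hd1]; linear_combination hva)
      (by rw [he2, cA2, hd2]; linear_combination hvb)⟩)))
  · -- D on AC, E on segment B D
    obtain ⟨hc2, v, hv0, hv1, hva, hvb⟩ := hc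
    refine Or.inr (Or.inl (Or.inr (Or.inr (Or.inl ⟨mk2seg b D A C d0 d2
      (lt_of_le_of_ne hd0nn (fun h => nDC ⟨h.symm, hc2⟩))
      (lt_of_le_of_ne hd2nn (fun h => nDA ⟨hc2, h.symm⟩)) (by linarith)
      (by rw [hd0, cA0, cC0]; ring) (by rw [hd1, cA1, cC1]; linarith)
      (by rw [hd2, cA2, cC2]; ring), mk2seg b E B D (1 - v) v
      (by linarith) hv0 (by ring)
      (by rw [he0, cB0, hd0]; linear_combination hvb)
      (by rw [he1, cB1, hd1]; linear_combination (-1 : ℝ) * hva - hvb + hse - v * hsd)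
      (by rw [he2, cB2, hd2]; linear_combination hva)⟩))))
  · -- E on AB, D on segment C E
    obtain ⟨hc2, v, hv0, hv1, hva, hvb⟩ := hc
    refine Or.inr (Or.inl (Or.inr (Or.inr (Or.inr (Or.inl ⟨mk2seg b E A B e0 e1
      (lt_of_le_of_ne he0nn (fun h => nEB ⟨h.symm, hc2⟩))
      (lt_of_le_of_ne he1nn (fun h => nEA ⟨h.symm, hc2⟩)) (by linarith)
      (by rw [he0, cA0, cB0]; ring) (by rw [he1, cA1, cB1]; ring)
      (by rw [he2, cA2, cB2]; linarith), mk2seg b D C E (1 - v) v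
      (by linarith) hv0 (by ring)
      (by rw [hd0, cC0, he0]; linear_combination hva)
      (by rw [hd1, cC1, he1]; linear_combination hvb)
      (by rw [hd2, cC2, he2]; linear_combination (-1 : ℝ) * hva - hvb + hsd - v * hse)⟩)))))
  · -- E on BC, D on segment A E
    obtain ⟨hc2, v, hv0, hv1, hva, hvb⟩ := hc
    refine Or.inr (Or.inl (Or.inr (Or.inr (Or.inr (Or.inr (Or.inl ⟨mk2seg b E B C e1 e2
      (lt_of_le_of_ne he1nn (fun h => nEC ⟨hc2, h.symm⟩))
      (lt_of_le_of_ne he2nn (fun h => nEB ⟨hc2, h.symm⟩)) (by linarith)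
      (by rw [he0, cB0, cC0]; linarith) (by rw [he1, cB1, cC1]; ring)
      (by rw [he2, cB2, cC2]; ring), mk2seg b D A E (1 - v) v
      (by linarith) hv0 (by ring)
      (by rw [hd0, cA0, he0]; linear_combination (-1 : ℝ) * hva - hvb + hsd - v * hse)
      (by rw [hd1, cA1, he1]; linear_combination hva)
      (by rw [hd2, cA2, he2]; linear_combination hvb)⟩))))))
  · -- E on AC, D on segment B E
    obtain ⟨hc2, v, hv0, hv1, hva, hvb⟩ := hc
    refine Or.inr (Or.inl (Or.inr (Or.inr (Or.inr (Or.inr (Or.inr ⟨mk2seg b E A C e0 e2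
      (lt_of_le_of_ne he0nn (fun h => nEC ⟨h.symm, hc2⟩))
      (lt_of_le_of_ne he2nn (fun h => nEA ⟨hc2, h.symm⟩)) (by linarith)
      (by rw [he0, cA0, cC0]; ring) (by rw [he1, cA1, cC1]; linarith)
      (by rw [he2, cA2, cC2]; ring), mk2seg b D B E (1 - v) v
      (by linarith) hv0 (by ring)
      (by rw [hd0, cB0, he0]; linear_combination hvb)
      (by rw [hd1, cB1, he1]; linear_combination (-1 : ℝ) * hva - hvb + hsd - v * hse)
      (by rw [hd2, cB2, he2]; linear_combination hva)⟩))))))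
  · -- both interior, collinear with a vertex
    obtain ⟨p0, p1, p2, q0, q1, q2, hdet⟩ := hc
    have hintD : D ∈ interior (convexHull ℝ ({A, B, C} : Set Pt)) := by
      rw [← hrange]
      exact interior_mem b (by rw [hd0]; exact p0) (by rw [hd1]; exact p1)
        (by rw [hd2]; exact p2)
    have hintE : E ∈ interior (convexHull ℝ ({A, B, C} : Set Pt)) := by
      rw [← hrange]
      exact interior_mem b (by rw [he0]; exact q0) (by rw [he1]; exact q1)
        (by rw [he2]; exact q2)
    refine Or.inr (Or.inr ⟨hintD, hintE, ?_⟩)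
    rcases hdet with hdt | hdt | hdt
    · -- d1 * e2 = d2 * e1 : collinear with A
      have ht1 : e1 = e1 / d1 * d1 := (div_mul_cancel₀ e1 (ne_of_gt p1)).symm
      have ht2 : e2 = e1 / d1 * d2 := by
        rw [div_mul_eq_mul_div, eq_div_iff (ne_of_gt p1)]
        linear_combination hdt
      refine Or.inl (collinear3 A D E (e1 / d1) (ext3 b ?_ ?_ ?_))
      · rw [coordline (b.coord 0), cA0, hd0, he0]
        linear_combination (-1 : ℝ) * ht1 - ht2 + hse - (e1 / d1) * hsd
      · rw [coordline (b.coord 1), cA1, hd1, he1]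
        linear_combination ht1
      · rw [coordline (b.coord 2), cA2, hd2, he2]
        linear_combination ht2
    · -- d2 * e0 = d0 * e2 : collinear with B
      have ht0 : e0 = e0 / d0 * d0 := (div_mul_cancel₀ e0 (ne_of_gt p0)).symm
      have ht2 : e2 = e0 / d0 * d2 := by
        rw [div_mul_eq_mul_div, eq_div_iff (ne_of_gt p0)]
        linear_combination (-1 : ℝ) * hdt
      refine Or.inr (Or.inl (collinear3 B D E (e0 / d0) (ext3 b ?_ ?_ ?_)))
      · rw [coordline (b.coord 0), cB0, hd0, he0]
        linear_combination ht0
      · rw [coordline (b.coord 1), cB1, hd1, he1]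
        linear_combination (-1 : ℝ) * ht0 - ht2 + hse - (e0 / d0) * hsd
      · rw [coordline (b.coord 2), cB2, hd2, he2]
        linear_combination ht2
    · -- d0 * e1 = d1 * e0 : collinear with C
      have ht0 : e0 = e0 / d0 * d0 := (div_mul_cancel₀ e0 (ne_of_gt p0)).symm
      have ht1 : e1 = e0 / d0 * d1 := by
        rw [div_mul_eq_mul_div, eq_div_iff (ne_of_gt p0)]
        linear_combination hdt
      refine Or.inr (Or.inr (collinear3 C D E (e0 / d0) (ext3 b ?_ ?_ ?_)))
      · rw [coordline (b.coord 0), cC0, hd0, he0]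
        linear_combination ht0
      · rw [coordline (b.coord 1), cC1, hd1, he1]
        linear_combination ht1
      · rw [coordline (b.coord 2), cC2, hd2, he2]
        linear_combination (-1 : ℝ) * ht0 - ht1 + hse - (e0 / d0) * hsd
end
end

section
/- The five vertices of a regular pentagon determine exactly three distinct angle values in (0,π), namely π/5, 2π/5, and 3π/5. -/
open EuclideanGeometry

noncomputable section

/-!
The chord from the point of angle `θ` on the unit circle to the point of angle `θ + 2α` is
`2 sin α` times the unit vector of angle `θ + α + π/2`. Hence for `0 < α, β < π` the angle at
`θ` subtended by the points of angles `θ + 2α` and `θ + 2β` is `|α - β|` (inscribed angle theorem).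
At a vertex `k` of the regular `n`-gon the other vertices sit at offsets `2aπ/n`, `1 ≤ a ≤ n - 1`,
so the angles formed are exactly the values `mπ/n` with `1 ≤ m ≤ n - 2`.
-/

open Real
open scoped RealInnerProductSpace

def circlePoint (θ : ℝ) : Pt := pt (cos θ) (sin θ)

theorem circlePoint_add_int_mul_two_pi (θ : ℝ) (m : ℤ) :
    circlePoint (θ + m * (2 * π)) = circlePoint θ := by
  simp only [circlePoint, cos_add_int_mul_two_pi, sin_add_int_mul_two_pi]

theorem inner_circlePoint (φ ψ : ℝ) : ⟪circlePoint φ, circlePoint ψ⟫ = cos (φ - ψ) := by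
  simp only [circlePoint, pt, WithLp.equiv_symm_apply, PiLp.inner_apply, RCLike.inner_apply,
    ringHom_apply, Fin.sum_univ_two, Fin.isValue, Matrix.cons_val_zero, Matrix.cons_val_one,
    Matrix.cons_val_fin_one, cos_sub]
  ring

theorem norm_circlePoint (φ : ℝ) : ‖circlePoint φ‖ = 1 := by
  have h := inner_circlePoint φ φ
  rwa [real_inner_self_eq_norm_sq, sub_self, cos_zero,
    pow_eq_one_iff_of_nonneg (norm_nonneg _) two_ne_zero] at h

theorem angle_circlePoint (φ ψ : ℝ) :
    InnerProductGeometry.angle (circlePoint φ) (circlePoint ψ) = arccos (cos (φ - ψ)) := by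
  rw [InnerProductGeometry.angle, inner_circlePoint, norm_circlePoint, norm_circlePoint, mul_one,
    div_one]

theorem circlePoint_add_two_mul_sub (θ α : ℝ) :
    circlePoint (θ + 2 * α) - circlePoint θ = (2 * sin α) • circlePoint (θ + α + π / 2) := by
  have hmid : (θ + 2 * α + θ) / 2 = θ + α := by ring
  have hhalf : (θ + 2 * α - θ) / 2 = α := by ring
  ext i
  fin_cases i
  · simp only [circlePoint, pt, WithLp.equiv_symm_apply, Fin.zero_eta, Fin.isValue,
      PiLp.sub_apply, PiLp.smul_apply, smul_eq_mul, Matrix.cons_val_zero, cos_sub_cos,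
      cos_add_pi_div_two, hmid, hhalf]
    ring
  · simp [circlePoint, pt, sin_sub_sin, sin_add_pi_div_two, hmid]

theorem circlePoint_ne_zero (φ : ℝ) : circlePoint φ ≠ 0 :=
  norm_ne_zero_iff.1 (by rw [norm_circlePoint]; exact one_ne_zero)

theorem circlePoint_add_two_mul_ne {α : ℝ} (hα : sin α ≠ 0) (θ : ℝ) :
    circlePoint (θ + 2 * α) ≠ circlePoint θ := by
  rw [← sub_ne_zero, circlePoint_add_two_mul_sub]
  exact smul_ne_zero (mul_ne_zero two_ne_zero hα) (circlePoint_ne_zero _)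

theorem angle_circlePoint_add_two_mul {α β : ℝ} (hα : α ∈ Set.Ioo 0 π) (hβ : β ∈ Set.Ioo 0 π)
    (θ : ℝ) :
    ∠ (circlePoint (θ + 2 * α)) (circlePoint θ) (circlePoint (θ + 2 * β)) = |α - β| := by
  have hsα : 0 < 2 * sin α := mul_pos two_pos (sin_pos_of_mem_Ioo hα)
  have hsβ : 0 < 2 * sin β := mul_pos two_pos (sin_pos_of_mem_Ioo hβ)
  have hdiff : θ + α + π / 2 - (θ + β + π / 2) = α - β := by ring
  rw [EuclideanGeometry.angle, vsub_eq_sub, vsub_eq_sub, circlePoint_add_two_mul_sub,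
    circlePoint_add_two_mul_sub, InnerProductGeometry.angle_smul_left_of_pos _ _ hsα,
    InnerProductGeometry.angle_smul_right_of_pos _ _ hsβ, angle_circlePoint, hdiff, ← cos_abs,
    arccos_cos (abs_nonneg _)]
  rw [abs_le]
  constructor <;> linarith [hα.1, hα.2, hβ.1, hβ.2]

theorem natCast_mul_pi_div_mem_Ioo {m n : ℕ} (hm : 0 < m) (hmn : m < n) :
    m * π / n ∈ Set.Ioo 0 π := by
  have hm' : (0 : ℝ) < m := by exact_mod_cast hm
  have hmn' : (m : ℝ) < n := by exact_mod_cast hmn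
  refine ⟨div_pos (mul_pos hm' pi_pos) (hm'.trans hmn'), ?_⟩
  rw [div_lt_iff₀ (hm'.trans hmn')]
  nlinarith [pi_pos]

def polygonVertex (n : ℕ) (k : Fin n) : Pt := circlePoint (2 * π * k / n)

theorem polygonVertex_eq_circlePoint (n : ℕ) [NeZero n] (i k : Fin n) :
    polygonVertex n i = circlePoint (2 * π * k / n + 2 * ((i - k : Fin n).val * π / n)) := by
  obtain ⟨q, hq⟩ : ∃ q : ℕ, k.val + (i - k : Fin n).val = i.val + n * q := by
    refine ⟨(k.val + (i - k : Fin n).val) / n, ?_⟩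
    have h := Nat.mod_add_div (k.val + (i - k : Fin n).val) n
    rw [← Fin.val_add, add_sub_cancel] at h
    exact h.symm
  have hn : (n : ℝ) ≠ 0 := Nat.cast_ne_zero.2 (NeZero.ne n)
  have hq' : (k.val : ℝ) + (i - k : Fin n).val = i.val + n * q := by exact_mod_cast hq
  have harg : 2 * π * k / n + 2 * ((i - k : Fin n).val * π / n) =
      2 * π * i / n + (q : ℤ) * (2 * π) := by
    field_simp
    linear_combination hq'
  rw [harg, circlePoint_add_int_mul_two_pi]
  rfl

theorem sub_val_mul_pi_div_mem_Ioo {n : ℕ} [NeZero n] {i k : Fin n} (h : i ≠ k) :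
    (i - k : Fin n).val * π / n ∈ Set.Ioo 0 π :=
  natCast_mul_pi_div_mem_Ioo (Nat.pos_of_ne_zero (Fin.val_ne_zero_iff.2 (sub_ne_zero_of_ne h)))
    (i - k).isLt

theorem angle_polygonVertex {n : ℕ} [NeZero n] {i j k : Fin n} (hi : i ≠ k) (hj : j ≠ k) :
    ∠ (polygonVertex n i) (polygonVertex n k) (polygonVertex n j) =
      |((i - k : Fin n).val : ℝ) - (j - k : Fin n).val| * π / n := by
  have hn : (0 : ℝ) < n := Nat.cast_pos.2 (Nat.pos_of_ne_zero (NeZero.ne n))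
  rw [polygonVertex_eq_circlePoint n i k, polygonVertex_eq_circlePoint n j k,
    show polygonVertex n k = circlePoint (2 * π * k / n) from rfl,
    angle_circlePoint_add_two_mul (sub_val_mul_pi_div_mem_Ioo hi) (sub_val_mul_pi_div_mem_Ioo hj),
    ← sub_div, ← sub_mul, abs_div, abs_mul, abs_of_pos pi_pos, abs_of_pos hn]

theorem polygonVertex_injective (n : ℕ) [NeZero n] : Function.Injective (polygonVertex n) := by
  intro i k hik
  by_contra hne
  refine circlePoint_add_two_mul_ne (sin_pos_of_mem_Ioo (sub_val_mul_pi_div_mem_Ioo hne)).ne'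
    (2 * π * k / n) ?_
  rw [← polygonVertex_eq_circlePoint, hik]
  rfl

theorem angleSet_range_polygonVertex (n : ℕ) [NeZero n] :
    angleSet (Set.range (polygonVertex n)) =
      {θ | ∃ m : ℕ, 0 < m ∧ m + 2 ≤ n ∧ θ = m * π / n} := by
  ext θ
  constructor
  · rintro ⟨-, _, ⟨i, rfl⟩, _, ⟨k, rfl⟩, _, ⟨j, rfl⟩, hik, hkj, hij, rfl⟩
    have hik := (polygonVertex_injective n).ne_iff.1 hik
    have hjk := ((polygonVertex_injective n).ne_iff.1 hkj).symm
    have hij := (polygonVertex_injective n).ne_iff.1 hij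
    have ha := Fin.val_ne_zero_iff.2 (sub_ne_zero_of_ne hik)
    have hb := Fin.val_ne_zero_iff.2 (sub_ne_zero_of_ne hjk)
    have hab : (i - k : Fin n).val ≠ (j - k : Fin n).val :=
      Fin.val_injective.ne ((sub_left_injective (b := k)).ne hij)
    have ha' := (i - k).isLt
    have hb' := (j - k).isLt
    refine ⟨((i - k : Fin n).val - (j - k : Fin n).val : ℤ).natAbs, by omega, by omega, ?_⟩
    rw [angle_polygonVertex hik hjk, Nat.cast_natAbs, Int.cast_abs]
    push_cast
    rfl
  · rintro ⟨m, hm, hmn, rfl⟩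
    have h1 : 1 < n := by omega
    have h2 : m + 1 < n := by omega
    have h0 : (⟨1, h1⟩ : Fin n) ≠ 0 := Fin.ne_of_val_ne one_ne_zero
    have hm0 : (⟨m + 1, h2⟩ : Fin n) ≠ 0 := Fin.ne_of_val_ne m.succ_ne_zero
    have h1m : (⟨1, h1⟩ : Fin n) ≠ ⟨m + 1, h2⟩ := by simp only [ne_eq, Fin.mk.injEq]; omega
    have hinj := polygonVertex_injective n
    refine ⟨natCast_mul_pi_div_mem_Ioo hm (by omega), _, ⟨_, rfl⟩, _, ⟨0, rfl⟩, _, ⟨_, rfl⟩,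
      hinj.ne h0, hinj.ne hm0.symm, hinj.ne h1m, ?_⟩
    rw [angle_polygonVertex h0 hm0, sub_zero, sub_zero]
    push_cast
    rw [sub_add_cancel_right, abs_neg, Nat.abs_cast]

theorem stmt12 :
    angleSet {p : Pt | ∃ k : Fin 5,
        p = pt (Real.cos (2 * Real.pi * k / 5)) (Real.sin (2 * Real.pi * k / 5))} =
      {Real.pi / 5, 2 * Real.pi / 5, 3 * Real.pi / 5} := by
  have hpentagon : {p : Pt | ∃ k : Fin 5,
      p = pt (Real.cos (2 * Real.pi * k / 5)) (Real.sin (2 * Real.pi * k / 5))} =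
        Set.range (polygonVertex 5) := by
    ext p
    simp only [Set.mem_ofPred_eq, Set.mem_range, polygonVertex, circlePoint, Nat.cast_ofNat,
      eq_comm]
  rw [hpentagon, angleSet_range_polygonVertex]
  ext θ
  constructor
  · rintro ⟨m, hm, hm3, rfl⟩
    obtain rfl | rfl | rfl : m = 1 ∨ m = 2 ∨ m = 3 := by omega
    all_goals simp [mul_div_assoc]
  · rintro (rfl | rfl | rfl)
    exacts [⟨1, by norm_num, by norm_num, by ring⟩, ⟨2, by norm_num, by norm_num, by ring⟩,
      ⟨3, by norm_num, by norm_num, by ring⟩]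
end
end
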